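/- arXiv:2511.18961 — 6 statements merged into one kernel-verified Lean document; each statement's English description precedes it below -/
import Mathlib

section
/- For every integer k ≥ 2, let H be the join of the complete graph K_{2k−3} and the cycle C_5 (the graph obtained by adding all edges between a copy of K_{2k−3} and a copy of C_5). Then the clique number of H is 2k−1, the set of odd cycle lengths of H is exactly {3, 5, …, 2k+1} (so |L_o(H)| = k and the longest odd cycle has length 2k+1 = 2|L_o(H)|+1), and the chromatic number of H is 2k = 2|L_o(H)|. -/
open SimpleGraph

/-- `G` contains a cycle of length `n`. -/
def SimpleGraph.HasCycleLength {V : Type*} (G : SimpleGraph V) (n : ℕ) : Prop :=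
  ∃ (v : V) (c : G.Walk v v), c.IsCycle ∧ c.length = n

/-- `L_o(G)`: the set of odd cycle lengths of `G`. -/
def SimpleGraph.oddCycleLengths {V : Type*} (G : SimpleGraph V) : Set ℕ :=
  {n | Odd n ∧ G.HasCycleLength n}

/-- `L_e(G)`: the set of even cycle lengths of `G`. -/
def SimpleGraph.evenCycleLengths {V : Type*} (G : SimpleGraph V) : Set ℕ :=
  {n | Even n ∧ G.HasCycleLength n}

/-- `G` is 2-connected: at least 3 vertices, and deleting any single vertex
leaves a connected graph. -/
def SimpleGraph.TwoConnected {V : Type*} [Fintype V] (G : SimpleGraph V) : Prop :=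
  3 ≤ Fintype.card V ∧ ∀ v : V, (G.induce {v}ᶜ).Connected

/-- The join of two graphs: disjoint union together with all edges between the two parts. -/
def SimpleGraph.joinGraph {α β : Type*} (G₁ : SimpleGraph α) (G₂ : SimpleGraph β) :
    SimpleGraph (α ⊕ β) where
  Adj x y :=
    match x, y with
    | Sum.inl a, Sum.inl b => G₁.Adj a b
    | Sum.inr a, Sum.inr b => G₂.Adj a b
    | Sum.inl _, Sum.inr _ => True
    | Sum.inr _, Sum.inl _ => True
  symm := by
    constructor
    rintro (a | a) (b | b) h
    · exact G₁.adj_symm h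
    · trivial
    · trivial
    · exact G₂.adj_symm h
  loopless := by
    constructor
    rintro (a | a) h
    · exact G₁.irrefl h
    · exact G₂.irrefl h

/-!
Clique number and chromatic number are additive under joins, and `ω(K_m) = χ(K_m) = m`,
`ω(C_5) = 2`, `χ(C_5) = 3`. For cycle lengths: if `P_a`, `P_b` are paths on `a, b ≥ 1` vertices,
then `P_a ∨ P_b` contains a cycle through all `a + b` vertices (along `P_a`, across, back along
`P_b`, across). Taking `P_a ⊆ K_m` and `P_b ⊆ C_5` gives in `K_m ∨ C_5` a cycle of every length
from `3` up to `m + 5`, the number of vertices.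
-/

theorem ncard_setOf_odd_three_le_le (k : ℕ) : {n | Odd n ∧ 3 ≤ n ∧ n ≤ 2 * k + 1}.ncard = k := by
  have : {n | Odd n ∧ 3 ≤ n ∧ n ≤ 2 * k + 1} = (fun i => 2 * i + 3) '' Set.Iio k := by
    ext n
    simp only [Set.mem_ofPred_eq, Set.mem_image, Set.mem_Iio, Nat.odd_iff]
    constructor
    · rintro ⟨h₁, h₂, h₃⟩
      exact ⟨(n - 3) / 2, by omega, by omega⟩
    · rintro ⟨i, hi, rfl⟩
      omega
  rw [this, Set.ncard_image_of_injective _ (fun a b h => by simpa using h)]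
  simp

namespace SimpleGraph

variable {α β : Type*} {G₁ : SimpleGraph α} {G₂ : SimpleGraph β}

@[simp]
lemma joinGraph_adj_inl_inl {a b : α} : (G₁.joinGraph G₂).Adj (.inl a) (.inl b) ↔ G₁.Adj a b :=
  Iff.rfl

@[simp]
lemma joinGraph_adj_inr_inr {a b : β} : (G₁.joinGraph G₂).Adj (.inr a) (.inr b) ↔ G₂.Adj a b :=
  Iff.rfl

@[simp]
lemma joinGraph_adj_inl_inr {a : α} {b : β} : (G₁.joinGraph G₂).Adj (.inl a) (.inr b) :=
  trivial

@[simp]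
lemma joinGraph_adj_inr_inl {a : α} {b : β} : (G₁.joinGraph G₂).Adj (.inr b) (.inl a) :=
  trivial

theorem IsContained.joinGraph {α' β' : Type*} {H₁ : SimpleGraph α'} {H₂ : SimpleGraph β'}
    (h₁ : G₁ ⊑ H₁) (h₂ : G₂ ⊑ H₂) : G₁.joinGraph G₂ ⊑ H₁.joinGraph H₂ := by
  obtain ⟨f₁⟩ := h₁
  obtain ⟨f₂⟩ := h₂
  refine ⟨⟨⟨Sum.map f₁ f₂, ?_⟩, Sum.map_injective.mpr ⟨f₁.injective, f₂.injective⟩⟩⟩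
  rintro (a | a) (b | b) h
  · exact f₁.toHom.map_adj h
  · trivial
  · trivial
  · exact f₂.toHom.map_adj h

theorem IsClique.toLeft {s : Finset (α ⊕ β)} (h : (G₁.joinGraph G₂).IsClique (s : Set (α ⊕ β))) :
    G₁.IsClique (s.toLeft : Set α) :=
  fun _ ha _ hb hab =>
    h (Finset.mem_toLeft.mp ha) (Finset.mem_toLeft.mp hb) (Sum.inl_injective.ne hab)

theorem IsClique.toRight {s : Finset (α ⊕ β)} (h : (G₁.joinGraph G₂).IsClique (s : Set (α ⊕ β))) :
    G₂.IsClique (s.toRight : Set β) :=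
  fun _ ha _ hb hab =>
    h (Finset.mem_toRight.mp ha) (Finset.mem_toRight.mp hb) (Sum.inr_injective.ne hab)

theorem IsClique.disjSum {s : Finset α} {t : Finset β} (hs : G₁.IsClique (s : Set α))
    (ht : G₂.IsClique (t : Set β)) : (G₁.joinGraph G₂).IsClique (s.disjSum t : Set (α ⊕ β)) := by
  rintro (a | a) ha (b | b) hb hab <;>
    simp only [Finset.mem_coe, Finset.inl_mem_disjSum, Finset.inr_mem_disjSum] at ha hb
  · exact hs ha hb (fun h => hab (congrArg _ h))
  · trivial
  · trivial
  · exact ht ha hb (fun h => hab (congrArg _ h))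

theorem cliqueNum_joinGraph [Finite α] [Finite β] :
    (G₁.joinGraph G₂).cliqueNum = G₁.cliqueNum + G₂.cliqueNum := by
  apply le_antisymm
  · obtain ⟨s, hs⟩ := (G₁.joinGraph G₂).exists_isNClique_cliqueNum
    rw [← hs.card_eq, ← Finset.card_toLeft_add_card_toRight]
    exact add_le_add (IsClique.card_le_cliqueNum (tc := hs.isClique.toLeft))
      (IsClique.card_le_cliqueNum (tc := hs.isClique.toRight))
  · obtain ⟨s, hs⟩ := G₁.exists_isNClique_cliqueNum
    obtain ⟨t, ht⟩ := G₂.exists_isNClique_cliqueNum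
    rw [← hs.card_eq, ← ht.card_eq, ← Finset.card_disjSum]
    exact IsClique.card_le_cliqueNum (tc := hs.isClique.disjSum ht.isClique)

theorem cliqueNum_top [Fintype α] : (⊤ : SimpleGraph α).cliqueNum = Fintype.card α := by
  apply le_antisymm
  · obtain ⟨s, hs⟩ := (⊤ : SimpleGraph α).exists_isNClique_cliqueNum
    exact hs.card_eq ▸ s.card_le_univ
  · exact IsClique.card_le_cliqueNum (t := Finset.univ) (tc := by simp)

def Coloring.joinGraph {γ₁ γ₂ : Type*} (C₁ : G₁.Coloring γ₁) (C₂ : G₂.Coloring γ₂) :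
    (G₁.joinGraph G₂).Coloring (γ₁ ⊕ γ₂) :=
  Coloring.mk (Sum.map C₁ C₂) <| by
    rintro (a | a) (b | b) h
    · exact fun e => C₁.valid h (Sum.inl_injective e)
    · exact Sum.inl_ne_inr
    · exact Sum.inr_ne_inl
    · exact fun e => C₂.valid h (Sum.inr_injective e)

theorem Colorable.joinGraph {n₁ n₂ : ℕ} (h₁ : G₁.Colorable n₁) (h₂ : G₂.Colorable n₂) :
    (G₁.joinGraph G₂).Colorable (n₁ + n₂) := by
  obtain ⟨C₁⟩ := h₁
  obtain ⟨C₂⟩ := h₂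
  simpa using (C₁.joinGraph C₂).colorable

theorem Colorable.of_joinGraph {n : ℕ} (h : (G₁.joinGraph G₂).Colorable n) :
    ∃ n₁ n₂, n₁ + n₂ = n ∧ G₁.Colorable n₁ ∧ G₂.Colorable n₂ := by
  classical
  obtain ⟨C⟩ := h
  let S : Set (Fin n) := Set.range (C ∘ Sum.inl)
  let C₁ : G₁.Coloring S :=
    Coloring.mk (fun a => ⟨C (.inl a), a, rfl⟩) fun h e =>
      C.valid (joinGraph_adj_inl_inl.mpr h) (congrArg Subtype.val e)
  let C₂ : G₂.Coloring ↑Sᶜ :=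
    Coloring.mk (fun b => ⟨C (.inr b), fun ⟨a, ha⟩ => C.valid joinGraph_adj_inl_inr ha⟩)
      fun h e => C.valid (joinGraph_adj_inr_inr.mpr h) (congrArg Subtype.val e)
  refine ⟨_, _, ?_, C₁.colorable, C₂.colorable⟩
  have := set_fintype_card_le_univ S
  rw [Fintype.card_compl_set, Fintype.card_fin] at *
  omega

theorem chromaticNumber_joinGraph :
    (G₁.joinGraph G₂).chromaticNumber = G₁.chromaticNumber + G₂.chromaticNumber := by
  apply le_antisymm
  · rcases eq_or_ne G₁.chromaticNumber ⊤ with h₁ | h₁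
    · simp [h₁]
    rcases eq_or_ne G₂.chromaticNumber ⊤ with h₂ | h₂
    · simp [h₂]
    calc (G₁.joinGraph G₂).chromaticNumber
        ≤ (G₁.chromaticNumber.toNat + G₂.chromaticNumber.toNat : ℕ) :=
          ((colorable_of_chromaticNumber_ne_top h₁).joinGraph
            (colorable_of_chromaticNumber_ne_top h₂)).chromaticNumber_le
      _ = G₁.chromaticNumber + G₂.chromaticNumber := by
          rw [Nat.cast_add, ENat.natCast_toNat h₁, ENat.natCast_toNat h₂]
  · rcases eq_or_ne (G₁.joinGraph G₂).chromaticNumber ⊤ with h | h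
    · simp [h]
    obtain ⟨n₁, n₂, hn, h₁, h₂⟩ := (colorable_of_chromaticNumber_ne_top h).of_joinGraph
    calc G₁.chromaticNumber + G₂.chromaticNumber ≤ n₁ + n₂ :=
          add_le_add h₁.chromaticNumber_le h₂.chromaticNumber_le
      _ = (G₁.joinGraph G₂).chromaticNumber := by
          rw [← ENat.natCast_toNat h, ← hn, Nat.cast_add]

theorem cycleGraph_adj_val {n : ℕ} {u v : Fin n} (h : (cycleGraph n).Adj u v) :
    u.val + 1 = v.val ∨ v.val + 1 = u.val ∨ (u.val = 0 ∧ v.val + 1 = n) ∨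
      (v.val = 0 ∧ u.val + 1 = n) := by
  have := u.isLt
  have := v.isLt
  rw [cycleGraph_adj'] at h
  rcases lt_trichotomy u v with huv | rfl | huv
  · rw [Fin.coe_sub_iff_lt.mpr huv, Fin.coe_sub_iff_le.mpr huv.le] at h
    rw [Fin.lt_def] at huv
    omega
  · simp [Fin.coe_sub_iff_le.mpr le_rfl] at h
  · rw [Fin.coe_sub_iff_le.mpr huv.le, Fin.coe_sub_iff_lt.mpr huv] at h
    rw [Fin.lt_def] at huv
    omega

theorem cycleGraph_cliqueFree_three {n : ℕ} (hn : 4 ≤ n) : (cycleGraph n).CliqueFree 3 := by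
  intro s hs
  obtain ⟨a, b, c, hab, hac, hbc, rfl⟩ := Finset.card_eq_three.mp hs.card_eq
  obtain ⟨h₁, h₂, h₃⟩ := is3Clique_triple_iff.mp hs
  have := cycleGraph_adj_val h₁
  have := cycleGraph_adj_val h₂
  have := cycleGraph_adj_val h₃
  rw [Ne, Fin.ext_iff] at hab hac hbc
  omega

theorem cliqueNum_cycleGraph {n : ℕ} (hn : 4 ≤ n) : (cycleGraph n).cliqueNum = 2 := by
  apply le_antisymm
  · obtain ⟨s, hs⟩ := (cycleGraph n).exists_isNClique_cliqueNum
    by_contra! h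
    exact (cycleGraph_cliqueFree_three hn).mono h s hs
  · have hadj : (cycleGraph n).Adj ⟨0, by omega⟩ ⟨1, by omega⟩ :=
      pathGraph_le_cycleGraph (pathGraph_adj.mpr (by simp))
    have := IsClique.card_le_cliqueNum (t := ({⟨0, by omega⟩, ⟨1, by omega⟩} : Finset (Fin n)))
      (tc := by rw [Finset.coe_pair]; exact isClique_pair.mpr fun _ => hadj)
    rwa [Finset.card_pair hadj.ne] at this

theorem cycleGraph_isContained_pathGraph_joinGraph {a b : ℕ} (ha : 1 ≤ a) (hb : 1 ≤ b) :
    cycleGraph (a + b) ⊑ (pathGraph a).joinGraph (pathGraph b) := by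
  refine ⟨⟨⟨finSumFinEquiv.symm, fun {u v} huv => ?_⟩, finSumFinEquiv.symm.injective⟩⟩
  obtain ⟨x, rfl⟩ := finSumFinEquiv.surjective u
  obtain ⟨y, rfl⟩ := finSumFinEquiv.surjective v
  have := cycleGraph_adj_val huv
  rw [Equiv.symm_apply_apply, Equiv.symm_apply_apply]
  rcases x with x | x <;> rcases y with y | y <;>
    simp only [joinGraph_adj_inl_inl, joinGraph_adj_inr_inr, joinGraph_adj_inl_inr,
      joinGraph_adj_inr_inl, pathGraph_adj, finSumFinEquiv_apply_left, finSumFinEquiv_apply_right,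
      Fin.val_castAdd, Fin.val_natAdd] at this ⊢ <;> omega

theorem pathGraph_isContained_cycleGraph {m n : ℕ} (h : m ≤ n) : pathGraph m ⊑ cycleGraph n :=
  (isContained_iff_exists_le_comap.mpr ⟨Fin.castLEEmb h, fun u v huv => by
    simpa [pathGraph_adj] using huv⟩).mono_right pathGraph_le_cycleGraph

theorem Walk.IsCycle.length_le_card {V : Type*} [Fintype V] {G : SimpleGraph V} {v : V}
    {c : G.Walk v v} (hc : c.IsCycle) : c.length ≤ Fintype.card V := by
  have := hc.isPath_tail.length_lt
  have := Walk.length_tail_add_one hc.not_nil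
  omega

theorem hasCycleLength_top_joinGraph_cycleGraph {m p n : ℕ} (hm : 1 ≤ m) (hp : 1 ≤ p) :
    ((⊤ : SimpleGraph (Fin m)).joinGraph (cycleGraph p)).HasCycleLength n ↔
      3 ≤ n ∧ n ≤ m + p := by
  constructor
  · rintro ⟨v, c, hc, rfl⟩
    refine ⟨hc.three_le_length, ?_⟩
    simpa using hc.length_le_card
  · rintro ⟨h₃, hn⟩
    -- as many vertices as possible from the clique, the rest along a path of the cycle
    let j := min m (n - 1)
    have hcopy := (cycleGraph_isContained_pathGraph_joinGraph (a := j) (b := n - j)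
      (by omega) (by omega)).trans <| IsContained.joinGraph
        (isContained_top_iff.mpr ⟨Fin.castLEEmb (min_le_left _ _)⟩)
        (pathGraph_isContained_cycleGraph (m := n - j) (n := p) (by omega))
    rw [show j + (n - j) = n by omega] at hcopy
    exact (cycleGraph_isContained_iff (by omega)).mp hcopy

end SimpleGraph

/-- For `k ≥ 2`, the join `H` of `K_{2k-3}` and `C_5` satisfies
`w(H) = 2k-1`, `L_o(H) = {3, 5, …, 2k+1}` (so `|L_o(H)| = k`), and `χ(H) = 2k`. -/
theorem join_complete_cycle5_odd (k : ℕ) (hk : 2 ≤ k) :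
    let H := (⊤ : SimpleGraph (Fin (2 * k - 3))).joinGraph (SimpleGraph.cycleGraph 5)
    H.cliqueNum = 2 * k - 1 ∧
      H.oddCycleLengths = {n | Odd n ∧ 3 ≤ n ∧ n ≤ 2 * k + 1} ∧
      (H.oddCycleLengths).ncard = k ∧
      H.chromaticNumber = ((2 * k : ℕ) : ℕ∞) := by
  intro H
  have hodd : H.oddCycleLengths = {n | Odd n ∧ 3 ≤ n ∧ n ≤ 2 * k + 1} := by
    ext n
    simp only [oddCycleLengths, Set.mem_ofPred_eq, H,
      hasCycleLength_top_joinGraph_cycleGraph (by omega : 1 ≤ 2 * k - 3) (by norm_num : 1 ≤ 5),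
      Nat.odd_iff]
    omega
  refine ⟨?_, hodd, by rw [hodd, ncard_setOf_odd_three_le_le], ?_⟩
  · rw [cliqueNum_joinGraph, cliqueNum_top, cliqueNum_cycleGraph (by norm_num), Fintype.card_fin]
    omega
  · rw [chromaticNumber_joinGraph, chromaticNumber_top, Fintype.card_fin,
      chromaticNumber_cycleGraph_of_odd 5 (by norm_num) (by decide)]
    norm_cast
    omega
end

section
/- Let G be a 2-connected simple graph with minimum degree δ(G) ≥ 2k+1, where k ≥ 3. Then G has at least k distinct even cycle lengths, i.e. |L_e(G)| ≥ k. -/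
open SimpleGraph

namespace SimpleGraph.Walk
variable {V : Type*} {G : SimpleGraph V}

lemma getVert_eq_support_getElem' {u v : V} (p : G.Walk u v) {i : ℕ} (hi : i ≤ p.length) :
    p.getVert i = p.support[i]'(by rw [length_support]; omega) := by
  induction p generalizing i with
  | nil =>
    simp only [length_nil, Nat.le_zero] at hi
    subst hi; simp
  | cons h q ih =>
    cases i with
    | zero => simp
    | succ n =>
      simp only [support_cons, getVert_cons_succ]
      rw [ih (by simpa using hi)]
      simp

lemma IsPath.getVert_injOn' {u v : V} {p : G.Walk u v} (hp : p.IsPath) {i j : ℕ}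
    (hi : i ≤ p.length) (hj : j ≤ p.length) (h : p.getVert i = p.getVert j) : i = j := by
  rw [p.getVert_eq_support_getElem' hi, p.getVert_eq_support_getElem' hj] at h
  exact (List.Nodup.getElem_inj_iff hp.support_nodup).mp h

lemma getVert_prefix' {u w x : V} {p : G.Walk u x} (q : G.Walk u w) (r : G.Walk w x)
    (hqr : q.append r = p) : p.getVert q.length = w := by
  subst hqr
  rw [getVert_append]
  simp

lemma start_notMem_dropUntil' [DecidableEq V] {u w x : V} {q : G.Walk u x} (hq : q.IsPath)
    (hw : w ∈ q.support) (hne : u ≠ w) : u ∉ (q.dropUntil w hw).support := by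
  intro h
  have hd := q.take_spec hw
  have hs : (q.takeUntil w hw).support ++ (q.dropUntil w hw).support.tail = q.support := by
    rw [← support_append, hd]
  have nod : ((q.takeUntil w hw).support ++ (q.dropUntil w hw).support.tail).Nodup := by
    rw [hs]; exact hq.support_nodup
  have disj := List.disjoint_of_nodup_append nod
  have h1 : u ∈ (q.takeUntil w hw).support := start_mem_support _
  have h2 : u ∈ (q.dropUntil w hw).support.tail := by
    have := (q.dropUntil w hw).support_eq_cons
    rw [this] at h
    rcases List.mem_cons.mp h with h | h
    · exact absurd h hne
    · exact h
  exact disj h1 h2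

lemma takeUntil_length_inj' [DecidableEq V] {u v w1 w2 : V} (p : G.Walk u v)
    (h1 : w1 ∈ p.support) (h2 : w2 ∈ p.support)
    (h : (p.takeUntil w1 h1).length = (p.takeUntil w2 h2).length) : w1 = w2 := by
  have e1 := getVert_prefix' _ _ (p.take_spec h1)
  have e2 := getVert_prefix' _ _ (p.take_spec h2)
  rw [h] at e1
  exact e1.symm.trans e2

lemma IsCycle.length_le_card' [Fintype V] {u : V} {c : G.Walk u u} (hc : c.IsCycle) :
    c.length ≤ Fintype.card V := by
  have h1 : c.support.tail.length = c.length := by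
    have := c.length_support
    simp [this]
  rw [← h1]
  exact hc.support_nodup.length_le_card

lemma key_cycle [DecidableEq V] {u v w1 w2 : V} {d1 d2 : ℕ} {p : G.Walk u v} (hp : p.IsPath)
    (h1 : G.Adj u w1) (h2 : G.Adj u w2)
    (hm1 : w1 ∈ p.support) (hm2 : w2 ∈ p.support)
    (hd1 : (p.takeUntil w1 hm1).length = d1)
    (hd2 : (p.takeUntil w2 hm2).length = d2)
    (hlt : d1 < d2) :
    G.HasCycleLength (d2 - d1 + 2) := by
  set q := p.takeUntil w2 hm2 with hqdef
  have hne12 : w1 ≠ w2 := by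
    rintro rfl
    rw [hd1] at hd2
    omega
  have hqp : q.IsPath := hp.takeUntil hm2
  have hql : q.length = d2 := hd2
  have hpd1 : p.getVert d1 = w1 := by
    rw [← hd1]; exact getVert_prefix' _ _ (p.take_spec hm1)
  have hqd1 : q.getVert d1 = w1 := by
    have hsp := p.take_spec hm2
    have he : p.getVert d1 = q.getVert d1 := by
      conv_lhs => rw [← hsp]
      rw [getVert_append, if_pos (by omega : d1 < q.length)]
    rw [← he, hpd1]
  have hw1q : w1 ∈ q.support := mem_support_iff_exists_getVert.mpr ⟨d1, hqd1, by omega⟩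
  have ht1 : (q.takeUntil w1 hw1q).length = d1 := by
    apply hqp.getVert_injOn' (length_takeUntil_le _ _) (by omega)
    rw [getVert_prefix' _ _ (q.take_spec hw1q), hqd1]
  have hrlen : (q.dropUntil w1 hw1q).length = d2 - d1 := by
    have hh := congrArg Walk.length (q.take_spec hw1q)
    rw [length_append, ht1] at hh
    omega
  set r := q.dropUntil w1 hw1q with hrdef
  have hrp : r.IsPath := hqp.dropUntil hw1q
  have hur : u ∉ r.support := start_notMem_dropUntil' hqp hw1q (G.ne_of_adj h1)
  refine ⟨u, Walk.cons h1 (r.concat h2.symm), ?_, ?_⟩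
  · rw [cons_isCycle_iff]
    constructor
    · rw [← isPath_reverse_iff, reverse_concat]
      rw [cons_isPath_iff]
      refine ⟨hrp.reverse, ?_⟩
      rw [support_reverse]
      simpa using hur
    · rw [edges_concat]
      intro hmem
      rw [List.concat_eq_append, List.mem_append, List.mem_singleton] at hmem
      rcases hmem with hmem | hmem
      · exact hur (fst_mem_support_of_mem_edges _ hmem)
      · rw [Sym2.eq_iff] at hmem
        rcases hmem with ⟨h', _⟩ | ⟨_, h'⟩
        · exact hur (h' ▸ end_mem_support r)
        · exact hne12 h'
  · simp [length_concat, hrlen]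
end SimpleGraph.Walk

/-- If `G` is a 2-connected graph with `δ(G) ≥ 2k+1`, `k ≥ 3`,
then `G` has at least `k` distinct even cycle lengths. -/
theorem even_cycle_lengths_of_minDegree {V : Type*} [Fintype V]
    (G : SimpleGraph V) [DecidableRel G.Adj] (k : ℕ) (hk : 3 ≤ k)
    (h2conn : G.TwoConnected)
    (hδ : 2 * k + 1 ≤ G.minDegree) :
    k ≤ (G.evenCycleLengths).ncard := by
  obtain ⟨hcard, -⟩ := h2conn

  classical
  have hVne : Nonempty V := Fintype.card_pos_iff.mp (by omega)
  obtain ⟨v0⟩ := hVne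
  set n := Fintype.card V with hn
  set P : ℕ → Prop := fun m => ∃ (a b : V) (q : G.Walk a b), q.IsPath ∧ q.length = m with hP
  have hP0 : P 0 := ⟨v0, v0, Walk.nil, Walk.IsPath.nil, rfl⟩
  have hMspec : P (Nat.findGreatest P n) := Nat.findGreatest_spec (Nat.zero_le n) hP0
  set M := Nat.findGreatest P n with hM
  obtain ⟨u, v, p, hp, hplen⟩ := hMspec
  have hmax : ∀ {a b : V} (q : G.Walk a b), q.IsPath → q.length ≤ M := by
    intro a b q hq
    exact Nat.le_findGreatest (le_of_lt (by simpa using hq.length_lt)) ⟨a, b, q, hq, rfl⟩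
  have hsupp : ∀ w ∈ G.neighborFinset u, w ∈ p.support := by
    intro w hw
    rw [G.mem_neighborFinset] at hw
    by_contra hws
    have hq : (Walk.cons hw.symm p).IsPath := (Walk.cons_isPath_iff _ _).mpr ⟨hp, hws⟩
    have hle := hmax _ hq
    rw [Walk.length_cons, hplen] at hle
    omega
  set D : Finset ℕ := (G.neighborFinset u).attach.image
      (fun w => (p.takeUntil w.1 (hsupp w.1 w.2)).length) with hD
  have hDcard : 2 * k + 1 ≤ D.card := by
    rw [hD, Finset.card_image_of_injOn, Finset.card_attach]
    · calc 2*k+1 ≤ G.minDegree := hδ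
        _ ≤ G.degree u := G.minDegree_le_degree u
        _ = (G.neighborFinset u).card := rfl
    · intro w1 hw1 w2 hw2 h
      exact Subtype.ext (p.takeUntil_length_inj' _ _ h)
  have hDmem : ∀ d ∈ D, ∃ w, G.Adj u w ∧ ∃ (hm : w ∈ p.support),
      (p.takeUntil w hm).length = d := by
    intro d hd
    rw [hD, Finset.mem_image] at hd
    obtain ⟨w, -, hlen⟩ := hd
    exact ⟨w.1, G.mem_neighborFinset u w.1 |>.mp w.2, hsupp w.1 w.2, hlen⟩
  obtain ⟨S, hSD, hScard, hSpar⟩ : ∃ S : Finset ℕ, S ⊆ D ∧ k + 1 ≤ S.card ∧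
      ∀ a ∈ S, ∀ b ∈ S, (Even a ↔ Even b) := by
    have hsum := Finset.card_filter_add_card_filter_not
      (s := D) (p := fun d => Even d)
    by_cases h : k + 1 ≤ (D.filter (fun d => Even d)).card
    · refine ⟨D.filter (fun d => Even d), Finset.filter_subset _ _, h, ?_⟩
      intro a ha b hb
      rw [Finset.mem_filter] at ha hb
      exact iff_of_true ha.2 hb.2
    · refine ⟨D.filter (fun d => ¬ Even d), Finset.filter_subset _ _, by omega, ?_⟩
      intro a ha b hb
      rw [Finset.mem_filter] at ha hb
      exact iff_of_false ha.2 hb.2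
  have hSne : S.Nonempty := Finset.card_pos.mp (by omega)
  set m := S.min' hSne with hm
  have hmS : m ∈ S := S.min'_mem hSne
  set T : Finset ℕ := (S.erase m).image (fun d => d - m + 2) with hT
  have hTcard : k ≤ T.card := by
    rw [hT, Finset.card_image_of_injOn, Finset.card_erase_of_mem hmS]
    · omega
    · intro a ha b hb hab
      have h1 : m ≤ a := S.min'_le a (Finset.mem_of_mem_erase ha)
      have h2 : m ≤ b := S.min'_le b (Finset.mem_of_mem_erase hb)
      have hab' : a - m + 2 = b - m + 2 := hab
      omega
  have hsub : (↑T : Set ℕ) ⊆ G.evenCycleLengths := by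
    intro x hx
    rw [Finset.mem_coe, hT, Finset.mem_image] at hx
    obtain ⟨d, hd, rfl⟩ := hx
    have hdS : d ∈ S := Finset.mem_of_mem_erase hd
    have hdm : m < d :=
      lt_of_le_of_ne (S.min'_le d hdS) (Ne.symm (Finset.ne_of_mem_erase hd))
    constructor
    · have hpar := hSpar d hdS m hmS
      have : Even (d - m) := (Nat.even_sub hdm.le).mpr hpar
      exact this.add even_two
    · obtain ⟨w1, hadj1, hms1, hlen1⟩ := hDmem m (hSD hmS)
      obtain ⟨w2, hadj2, hms2, hlen2⟩ := hDmem d (hSD hdS)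
      exact Walk.key_cycle hp hadj1 hadj2 hms1 hms2 hlen1 hlen2 hdm
  have hfin : (G.evenCycleLengths : Set ℕ).Finite := by
    apply Set.Finite.subset (Set.finite_Iic n)
    rintro x ⟨-, vv, c, hc, rfl⟩
    exact hc.length_le_card'
  calc k ≤ T.card := hTcard
    _ = (↑T : Set ℕ).ncard := (Set.ncard_coe_finset T).symm
    _ ≤ _ := Set.ncard_le_ncard hsub hfin
end

section
/- Let G be a finite simple graph that contains at least one even cycle, and let ℓ_e(G) be the length of a longest even cycle of G. Then the chromatic number of G satisfies χ(G) ≤ ℓ_e(G) + 1. -/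
/-!
A graph with no even cycle longer than `ℓ` is `ℓ`-degenerate, hence `(ℓ + 1)`-colourable.
Indeed, suppose every vertex of some vertex set `S` has at least `d ≥ 3` neighbours in `S`,
and take a longest path `x₀ x₁ … xₘ` inside `S`. All neighbours of `x₀` in `S` lie on it, at
`d` distinct positions; one parity class holds at least `⌈d/2⌉ ≥ 2` of them, and its extreme
positions `a < b` give the even cycle `x₀ xₐ xₐ₊₁ … x_b x₀` of length `b - a + 2 ≥ d`.
-/

open SimpleGraph

open Finset

lemma Finset.two_mul_card_le_max'_sub_min' {s : Finset ℕ} (hs : s.Nonempty) {r : ℕ}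
    (hr : ∀ x ∈ s, x % 2 = r) : 2 * #s ≤ s.max' hs - s.min' hs + 2 := by
  have hcard : #s ≤ #(Icc (s.min' hs / 2) (s.max' hs / 2)) := by
    refine card_le_card_of_injOn (· / 2) (fun x hx ↦ ?_) (fun x hx y hy hxy ↦ ?_)
    · simp only [coe_Icc, Set.mem_Icc]
      exact ⟨Nat.div_le_div_right (s.min'_le x hx), Nat.div_le_div_right (s.le_max' x hx)⟩
    · have := hr x hx; have := hr y hy
      simp only at hxy
      omega
  have := hr _ (s.min'_mem hs); have := hr _ (s.max'_mem hs)
  rw [Nat.card_Icc] at hcard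
  omega

lemma Finset.exists_lt_even_sub {A : Finset ℕ} {d : ℕ} (hd : 3 ≤ d) (hA : d ≤ #A) :
    ∃ a ∈ A, ∃ b ∈ A, a < b ∧ Even (b - a) ∧ d ≤ b - a + 2 := by
  obtain ⟨r, hr⟩ : ∃ r, d ≤ 2 * #{x ∈ A | x % 2 = r} := by
    have := card_filter_add_card_filter_not (s := A) (fun x ↦ x % 2 = 0)
    simp only [Nat.mod_two_ne_zero] at this
    by_cases h : d ≤ 2 * #{x ∈ A | x % 2 = 0}
    · exact ⟨0, h⟩
    · exact ⟨1, by omega⟩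
  set s := {x ∈ A | x % 2 = r}
  have hs : 1 < #s := by omega
  have hne : s.Nonempty := card_pos.mp (by omega)
  have hpar : ∀ x ∈ s, x % 2 = r := fun x hx ↦ (mem_filter.mp hx).2
  have hspan := two_mul_card_le_max'_sub_min' hne hpar
  have hlt := s.min'_lt_max'_of_card hs
  have := hpar _ (s.min'_mem hne); have := hpar _ (s.max'_mem hne)
  exact ⟨_, (mem_filter.mp (s.min'_mem hne)).1, _, (mem_filter.mp (s.max'_mem hne)).1,
    hlt, Nat.even_iff.mpr (by omega), by omega⟩

namespace SimpleGraph

variable {V : Type*} {G : SimpleGraph V}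

namespace Walk

variable {u v x y : V}

lemma IsPath.start_notMem_support_drop {p : G.Walk u v} (hp : p.IsPath) {n : ℕ} (hn : 0 < n)
    (hnp : n ≤ p.length) : u ∉ (p.drop n).support := by
  rw [mem_support_iff_exists_getVert]
  rintro ⟨i, hi, hle⟩
  rw [drop_length] at hle
  rw [drop_getVert, hp.getVert_eq_start_iff (by omega)] at hi
  omega

lemma IsPath.isCycle_cons_concat {q : G.Walk x y} (hq : q.IsPath) (hv : v ∉ q.support)
    (hxy : x ≠ y) (hx : G.Adj v x) (hy : G.Adj y v) : (cons hx (q.concat hy)).IsCycle := by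
  rw [cons_isCycle_iff, edges_concat, List.concat_eq_append, List.mem_append, List.mem_singleton,
    Sym2.eq_swap, Sym2.eq_iff]
  refine ⟨hq.concat hv hy, ?_⟩
  rintro (h | h)
  · exact hv (q.snd_mem_support_of_mem_edges h)
  · grind [hx.ne]

end Walk

open Walk in
lemma hasCycleLength_of_adj_getVert {u v : V} {p : G.Walk u v} (hp : p.IsPath) {a b : ℕ}
    (ha : 0 < a) (hab : a < b) (hb : b ≤ p.length)
    (hua : G.Adj u (p.getVert a)) (hub : G.Adj u (p.getVert b)) :
    G.HasCycleLength (b - a + 2) := by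
  set q := (p.drop a).take (b - a)
  have hend : (p.drop a).getVert (b - a) = p.getVert b := by
    rw [drop_getVert, Nat.add_sub_cancel' hab.le]
  have hq : q.IsPath := (hp.drop a).take _
  have hu : u ∉ q.support := fun h ↦
    hp.start_notMem_support_drop ha (by omega) ((isSubwalk_take _ _).support_subset h)
  have hne : p.getVert a ≠ (p.drop a).getVert (b - a) := by
    rw [hend]; intro h
    have := hp.getVert_injOn (Set.mem_ofPred.mpr (by omega)) (Set.mem_ofPred.mpr hb) h
    omega
  refine ⟨u, _, hq.isCycle_cons_concat hu hne hua (hend ▸ hub.symm), ?_⟩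
  rw [length_cons, length_concat, take_length, drop_length]
  omega

lemma exists_isPath_forall_adj_mem_support {S : Finset V} (hS : S.Nonempty) :
    ∃ (u v : V) (p : G.Walk u v), p.IsPath ∧ (∀ z ∈ p.support, z ∈ S) ∧
      ∀ x ∈ S, G.Adj u x → x ∈ p.support := by
  classical
  set L := {n | ∃ (u v : V) (p : G.Walk u v), p.IsPath ∧ (∀ z ∈ p.support, z ∈ S) ∧ p.length = n}
  have hbdd : BddAbove L := by
    refine ⟨#S, fun n ⟨u, v, p, hp, hpS, hn⟩ ↦ ?_⟩
    have := card_le_card (s := p.support.toFinset) (t := S) fun z hz ↦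
      hpS z (List.mem_toFinset.mp hz)
    rw [List.toFinset_card_of_nodup hp.support_nodup, Walk.length_support] at this
    omega
  obtain ⟨w, hw⟩ := hS
  have hne : L.Nonempty := ⟨0, w, w, .nil, .nil, by simpa using hw, rfl⟩
  obtain ⟨_, ⟨u, v, p, hp, hpS, rfl⟩, hmax⟩ := hbdd.exists_isGreatest_of_nonempty hne
  refine ⟨u, v, p, hp, hpS, fun x hx hux ↦ by_contra fun hxp ↦ ?_⟩
  have hlonger : p.length + 1 ∈ L := ⟨x, v, .cons hux.symm p, hp.cons hxp,
    by simpa [hx] using hpS, rfl⟩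
  have := hmax hlonger
  omega

lemma exists_even_hasCycleLength_of_le_degree [DecidableRel G.Adj] {S : Finset V}
    (hS : S.Nonempty) {d : ℕ} (hd : 3 ≤ d) (hdeg : ∀ v ∈ S, d ≤ #{u ∈ S | G.Adj v u}) :
    ∃ n, Even n ∧ d ≤ n ∧ G.HasCycleLength n := by
  classical
  obtain ⟨u, v, p, hp, hpS, hnbr⟩ := exists_isPath_forall_adj_mem_support (G := G) hS
  set A := {i ∈ range (p.length + 1) | G.Adj u (p.getVert i)}
  have hA : d ≤ #A := calc
    d ≤ #{x ∈ S | G.Adj u x} := hdeg u (hpS u p.start_mem_support)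
    _ ≤ #(A.image p.getVert) := card_le_card fun x hx ↦ by
      obtain ⟨hxS, hux⟩ := mem_filter.mp hx
      obtain ⟨i, rfl, hi⟩ := Walk.mem_support_iff_exists_getVert.mp (hnbr x hxS hux)
      exact mem_image.mpr ⟨i, mem_filter.mpr ⟨mem_range.mpr (by omega), hux⟩, rfl⟩
    _ ≤ #A := card_image_le
  obtain ⟨a, ha, b, hb, hab, heven, hdab⟩ := exists_lt_even_sub hd hA
  obtain ⟨ha, hua⟩ := mem_filter.mp ha
  obtain ⟨hb, hub⟩ := mem_filter.mp hb
  have ha0 : 0 < a := Nat.pos_of_ne_zero fun h ↦ by simp [h] at hua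
  refine ⟨b - a + 2, heven.add even_two, hdab, ?_⟩
  exact hasCycleLength_of_adj_getVert hp ha0 hab (Nat.lt_succ_iff.mp (mem_range.mp hb)) hua hub

def IsProperOn {α : Type*} (G : SimpleGraph V) (C : V → α) (S : Set V) : Prop :=
  ∀ a ∈ S, ∀ b ∈ S, G.Adj a b → C a ≠ C b

lemma IsProperOn.insert_update [DecidableEq V] {α : Type*} {C : V → α} {T : Set V}
    (hC : IsProperOn G C T) {v : V} (hv : v ∉ T) {c : α} (hc : ∀ u ∈ T, G.Adj v u → C u ≠ c) :
    IsProperOn G (Function.update C v c) (insert v T) := by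
  have hne {x} (hx : x ∈ T) : x ≠ v := ne_of_mem_of_not_mem hx hv
  rintro a (rfl | haT) b (rfl | hbT) hab
  · exact absurd hab G.irrefl
  · rw [Function.update_self, Function.update_of_ne (hne hbT)]
    exact (hc b hbT hab).symm
  · rw [Function.update_self, Function.update_of_ne (hne haT)]
    exact hc a haT hab.symm
  · rw [Function.update_of_ne (hne haT), Function.update_of_ne (hne hbT)]
    exact hC a haT b hbT hab

lemma colorable_of_forall_exists_degree_le [Fintype V] [DecidableRel G.Adj] {k : ℕ}
    (h : ∀ S : Finset V, S.Nonempty → ∃ v ∈ S, #{u ∈ S | G.Adj v u} ≤ k) :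
    G.Colorable (k + 1) := by
  classical
  suffices ∀ S : Finset V, ∃ C : V → Fin (k + 1), IsProperOn G C S by
    obtain ⟨C, hC⟩ := this univ
    exact ⟨Coloring.mk C fun hab ↦ hC _ (mem_univ _) _ (mem_univ _) hab⟩
  intro S
  induction S using Finset.strongInduction with
  | H S ih =>
  rcases S.eq_empty_or_nonempty with rfl | hS
  · exact ⟨0, by simp [IsProperOn]⟩
  obtain ⟨v, hvS, hv⟩ := h S hS
  obtain ⟨C, hC⟩ := ih (S.erase v) (erase_ssubset hvS)
  obtain ⟨c, -, hc⟩ := exists_mem_notMem_of_card_lt_card (s := {u ∈ S | G.Adj v u}.image C)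
    (t := univ) (by simpa using card_image_le.trans_lt (Nat.lt_succ_of_le hv))
  refine ⟨Function.update C v c, ?_⟩
  rw [← insert_erase hvS, coe_insert]
  refine hC.insert_update (notMem_erase v S) fun u hu hvu hcu ↦ hc ?_
  exact mem_image.mpr ⟨u, mem_filter.mpr ⟨mem_of_mem_erase hu, hvu⟩, hcu⟩

end SimpleGraph

theorem chromatic_le_longest_even_cycle_add_one_general {V : Type*} [Fintype V]
    (G : SimpleGraph V) (le : ℕ)
    (hle_cyc : G.HasCycleLength le)
    (hle_max : ∀ n, Even n → G.HasCycleLength n → n ≤ le) :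
    G.chromaticNumber ≤ ((le + 1 : ℕ) : ℕ∞) := by
  classical
  have hle : 3 ≤ le := by
    obtain ⟨v, c, hc, rfl⟩ := hle_cyc
    exact hc.three_le_length
  refine (colorable_of_forall_exists_degree_le fun S hS ↦ ?_).chromaticNumber_le
  by_contra! hdeg
  obtain ⟨n, hn, hlen, hcyc⟩ :=
    exists_even_hasCycleLength_of_le_degree hS (by omega : 3 ≤ le + 1) hdeg
  have := hle_max n hn hcyc
  omega

/-- If `G` contains an even cycle and `ℓ_e(G)` is the length of a longest
even cycle of `G`, then `χ(G) ≤ ℓ_e(G) + 1`. -/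
theorem chromatic_le_longest_even_cycle_add_one {V : Type*} [Fintype V]
    (G : SimpleGraph V) (le : ℕ)
    (hle_even : Even le) (hle_cyc : G.HasCycleLength le)
    (hle_max : ∀ n, Even n → G.HasCycleLength n → n ≤ le) :
    G.chromaticNumber ≤ ((le + 1 : ℕ) : ℕ∞) :=
  chromatic_le_longest_even_cycle_add_one_general G le hle_cyc hle_max
end

section
/- Let G be a finite simple graph with at least three distinct even cycle lengths (|L_e(G)| ≥ 3) and clique number w(G) ≤ ℓ_e(G), where ℓ_e(G) is the length of a longest even cycle of G. Then the chromatic number of G satisfies χ(G) ≤ ℓ_e(G). -/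
open SimpleGraph

/-!
Let `d = ℓ_e(G)`. A graph is `d`-colourable as soon as every nonempty vertex set `s` contains a
vertex with fewer than `d` neighbours in `s` (colour greedily after removing such a vertex). So it
suffices to find a `(d + 1)`-clique whenever every vertex of `s` has at least `d` neighbours in `s`.
Take a longest path `x 0, …, x len` in `s`: all neighbours of `x 0` in `s` lie on it, and since `G`
has no even cycle longer than `d`, the odd positions among them are below `d` and those of equal
parity span at most `d - 2`. Counting forces them to be exactly the odd positions below `d` and
the even positions of a window `[m, m + d - 2]`. Pósa rotations `x k, …, x 0, x (k + 1), …` are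
longest paths with other endpoints, described in the same way; comparing these descriptions rules
out `m ≥ 4`, so `x 0` is adjacent to `x 1, …, x d`, and one more rotation shows that
`x 0, …, x d` is a clique.
-/

open Finset

theorem exists_window_of_le_card {S : Finset ℕ} {d : ℕ} (hd : 0 < d) (hd2 : d % 2 = 0)
    (hcard : d ≤ #S) (hodd : ∀ i ∈ S, i % 2 = 1 → i < d)
    (hgap : ∀ i ∈ S, ∀ j ∈ S, i < j → i % 2 = j % 2 → j ≤ i + d - 2) :
    ∃ m ∈ S, m % 2 = 0 ∧ ∀ i, i ∈ S ↔ i % 2 = 1 ∧ i < d ∨ i % 2 = 0 ∧ m ≤ i ∧ i ≤ m + d - 2 := by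
  have hev : ∃ j ∈ S, j % 2 = 0 := by
    by_contra! hall
    have : #S ≤ #(range (d / 2)) := card_le_card_of_injOn (· / 2)
      (fun i hi => by have := hodd i hi (by have := hall i hi; omega); simp; omega)
      (fun i hi j hj h => by have := hall i hi; have := hall j hj; simp at h; omega)
    simp at this
    omega
  obtain ⟨m, hmS, hmin⟩ := exists_min_image {j ∈ S | j % 2 = 0} id
    (by obtain ⟨j, hj, hj2⟩ := hev; exact ⟨j, mem_filter.2 ⟨hj, hj2⟩⟩)
  obtain ⟨hmS, hm2⟩ := mem_filter.1 hmS
  set U := {i ∈ range d | i % 2 = 1} ∪ {i ∈ Icc m (m + d - 2) | i % 2 = 0}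
  have hSU : S ⊆ U := by
    intro i hi
    rcases Nat.mod_two_eq_zero_or_one i with h | h
    · rcases eq_or_lt_of_le (show m ≤ i from hmin i (mem_filter.2 ⟨hi, h⟩)) with rfl | hlt
      · simp [U]
        omega
      · have := hgap m hmS i hi hlt (by omega)
        simp [U]
        omega
    · have := hodd i hi h
      simp [U]
      omega
  have hUd : #U ≤ d := calc
    #U ≤ #(range d) := card_le_card_of_injOn
      (fun i => if i % 2 = 1 then i / 2 else d / 2 + (i - m) / 2)
      (fun i hi => by simp [U] at hi; simp; split_ifs <;> omega)
      (fun i hi j hj h => by simp [U] at hi hj; simp at h; split_ifs at h <;> omega)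
    _ = d := card_range d
  refine ⟨m, hmS, hm2, fun i => ?_⟩
  rw [eq_of_subset_of_card_le hSU (hUd.trans hcard)]
  simp only [U, mem_union, mem_filter, mem_range, mem_Icc]
  omega

namespace SimpleGraph

variable {V : Type*} {G : SimpleGraph V}

theorem hasCycleLength_of_injOn {x : ℕ → V} {n : ℕ} (hn : 3 ≤ n)
    (hinj : Set.InjOn x (Set.Iio n)) (hadj : ∀ i, i + 1 < n → G.Adj (x i) (x (i + 1)))
    (hclose : G.Adj (x (n - 1)) (x 0)) : G.HasCycleLength n := by
  set l := (List.range n).map x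
  have hne : l ≠ [] := by simp [l]; omega
  have hchain : l.IsChain G.Adj :=
    (List.isChain_map x).2 <| (List.isChain_range _ n).2 fun i hi => hadj i (by omega)
  have hcl : G.Adj (l.getLast hne) (l.head hne) := by
    simpa [l, List.getLast_map, List.head_map, List.getLast_range] using hclose
  refine ⟨_, .cons hcl (.ofSupport l hne hchain), ?_, by simp [l]; omega⟩
  have hpath : (Walk.ofSupport l hne hchain).IsPath := by
    rw [Walk.isPath_def, Walk.support_ofSupport]
    exact List.Nodup.map_on (fun i hi j hj h => hinj (by simpa using hi) (by simpa using hj) h)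
      List.nodup_range
  rw [Walk.isCycle_iff_isPath_tail_and_le_length, Walk.tail_cons]
  exact ⟨(Walk.isPath_copy _ _ _).2 hpath, by simp [l]; omega⟩

/-- A path of `G` inside `s`, indexed by `ℕ` so that `omega` can do the index arithmetic; the
values of `x` beyond `len` play no role. -/
structure PathIn (G : SimpleGraph V) (s : Finset V) where
  len : ℕ
  x : ℕ → V
  mem : ∀ i ≤ len, x i ∈ s
  injOn : ∀ i ≤ len, ∀ j ≤ len, x i = x j → i = j
  adj : ∀ i < len, G.Adj (x i) (x (i + 1))

namespace PathIn

variable {s : Finset V} (p : PathIn G s)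

def IsLongest : Prop := ∀ q : PathIn G s, q.len ≤ p.len

theorem len_lt_card : p.len < #s := by
  have := card_le_card_of_injOn p.x (s := range (p.len + 1))
    (fun i hi => p.mem i (by simp at hi; omega))
    (fun i hi j hj h => p.injOn i (by simp at hi; omega) j (by simp at hj; omega) h)
  simpa using this

theorem exists_isLongest (hs : s.Nonempty) : ∃ p : PathIn G s, p.IsLongest := by
  classical
  obtain ⟨v, hv⟩ := hs
  have h0 : ∃ p : PathIn G s, p.len = 0 :=
    ⟨⟨0, fun _ => v, fun _ _ => hv, fun i hi j hj _ => by omega, fun i hi => by omega⟩, rfl⟩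
  obtain ⟨p, hp⟩ :=
    Nat.findGreatest_spec (P := fun n => ∃ p : PathIn G s, p.len = n) (Nat.zero_le #s) h0
  exact ⟨p, fun q => hp ▸ Nat.le_findGreatest q.len_lt_card.le ⟨q, rfl⟩⟩

def cons (v : V) (hv : v ∈ s) (hnew : ∀ i ≤ p.len, p.x i ≠ v) (h : G.Adj v (p.x 0)) :
    PathIn G s where
  len := p.len + 1
  x t := match t with
    | 0 => v
    | t + 1 => p.x t
  mem t ht := by
    rcases t with _ | t
    exacts [hv, p.mem t (by omega)]
  injOn i hi j hj hij := by
    rcases i with _ | i <;> rcases j with _ | j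
    · rfl
    · exact absurd hij.symm (hnew j (by omega))
    · exact absurd hij (hnew i (by omega))
    · rw [p.injOn i (by omega) j (by omega) hij]
  adj t ht := by
    rcases t with _ | t
    exacts [h, p.adj t (by omega)]

theorem IsLongest.exists_eq_of_adj {p : PathIn G s} (hp : p.IsLongest) {v : V} (hv : v ∈ s)
    (h : G.Adj (p.x 0) v) : ∃ i ≤ p.len, p.x i = v := by
  by_contra! hnew
  have := hp (p.cons v hv hnew h.symm)
  simp [cons] at this

/-- Pósa rotation: the chord `x 0 ~ x (k + 1)` turns `x k, …, x 0, x (k + 1), …, x len` into a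
path of the same length ending at the new endpoint `x k`. -/
def rotate (k : ℕ) (hk : k < p.len) (h : G.Adj (p.x 0) (p.x (k + 1))) : PathIn G s where
  len := p.len
  x t := if t ≤ k then p.x (k - t) else p.x t
  mem t ht := by split_ifs <;> exact p.mem _ (by omega)
  injOn i hi j hj hij := by
    split_ifs at hij <;> have := p.injOn _ (by omega) _ (by omega) hij <;> omega
  adj t ht := by
    rcases lt_trichotomy t k with htk | rfl | htk
    · rw [if_pos htk.le, if_pos (by omega : t + 1 ≤ k), show k - t = k - (t + 1) + 1 by omega]
      exact (p.adj _ (by omega)).symm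
    · simpa using h
    · rw [if_neg (by omega), if_neg (by omega)]
      exact p.adj t ht

theorem IsLongest.rotate {p : PathIn G s} (hp : p.IsLongest) (k : ℕ) (hk : k < p.len)
    (h : G.Adj (p.x 0) (p.x (k + 1))) : (p.rotate k hk h).IsLongest :=
  hp

variable {k : ℕ} {hk : k < p.len} {h : G.Adj (p.x 0) (p.x (k + 1))}

theorem rotate_x_of_le {t : ℕ} (ht : t ≤ k) : (p.rotate k hk h).x t = p.x (k - t) :=
  if_pos ht

theorem rotate_x_of_lt {t : ℕ} (ht : k < t) : (p.rotate k hk h).x t = p.x t :=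
  if_neg (by omega)

@[simp]
theorem rotate_len : (p.rotate k hk h).len = p.len :=
  rfl

@[simp]
theorem rotate_x_zero : (p.rotate k hk h).x 0 = p.x k :=
  p.rotate_x_of_le (Nat.zero_le k)

theorem hasCycleLength_of_idx (idx : ℕ → ℕ) {n : ℕ} (hn : 3 ≤ n) (hle : ∀ t < n, idx t ≤ p.len)
    (hinj : ∀ t < n, ∀ u < n, idx t = idx u → t = u)
    (hadj : ∀ t, t + 1 < n → G.Adj (p.x (idx t)) (p.x (idx (t + 1))))
    (hclose : G.Adj (p.x (idx (n - 1))) (p.x (idx 0))) : G.HasCycleLength n :=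
  hasCycleLength_of_injOn hn
    (fun t ht u hu h => hinj t ht u hu (p.injOn _ (hle t ht) _ (hle u hu) h)) hadj hclose

/-- The cycle `x 0, …, x a, x b, …, x c`. -/
theorem hasCycleLength_of_chords {a b c : ℕ} (hab : a < b) (hbc : b ≤ c) (hc : c ≤ p.len)
    (hlen : 1 ≤ a + (c - b)) (hchord : G.Adj (p.x a) (p.x b)) (hclose : G.Adj (p.x c) (p.x 0)) :
    G.HasCycleLength (a + (c - b) + 2) := by
  refine p.hasCycleLength_of_idx (fun t => if t ≤ a then t else t + b - (a + 1)) (by omega)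
    (fun t ht => by split_ifs <;> omega) (fun t ht u hu htu => by split_ifs at htu <;> omega)
    (fun t ht => ?_)
    (by rwa [if_neg (by omega), show a + (c - b) + 2 - 1 + b - (a + 1) = c by omega])
  rcases lt_trichotomy t a with hta | rfl | hta
  · rw [if_pos hta.le, if_pos (by omega : t + 1 ≤ a)]
    exact p.adj t (by omega)
  · rwa [if_pos le_rfl, if_neg (by omega), show t + 1 + b - (t + 1) = b by omega]
  · rw [if_neg (by omega), if_neg (by omega),
      show t + 1 + b - (a + 1) = t + b - (a + 1) + 1 by omega]
    exact p.adj _ (by omega)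

/-- The cycle `x m, x (m + 1), x (k + 1), …, x l, x k, …, x 0`. -/
theorem hasCycleLength_of_band {k l m : ℕ} (hkl : k < l) (hlm : l < m) (hm : m < p.len)
    (h0m : G.Adj (p.x 0) (p.x m)) (hm1 : G.Adj (p.x (m + 1)) (p.x (k + 1)))
    (hlk : G.Adj (p.x l) (p.x k)) : G.HasCycleLength (l + 3) := by
  refine p.hasCycleLength_of_idx
    (fun t => if t = 0 then m else if t = 1 then m + 1 else if t ≤ l + 1 - k then k + t - 1
      else l + 2 - t) (by omega)
    (fun t ht => by split_ifs <;> omega) (fun t ht u hu htu => by split_ifs at htu <;> omega)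
    (fun t ht => ?_) (by simpa [show l + 3 - 1 = l + 2 by omega, show ¬ l + 2 ≤ l + 1 - k by omega]
      using h0m)
  rcases Nat.lt_or_ge t 2 with ht2 | ht2
  · interval_cases t
    · simpa using p.adj m hm
    · simpa [show 2 ≤ l + 1 - k by omega] using hm1
  rw [if_neg (show t ≠ 0 by omega), if_neg (show t ≠ 1 by omega),
    if_neg (show t + 1 ≠ 0 by omega), if_neg (show t + 1 ≠ 1 by omega)]
  rcases lt_trichotomy t (l + 1 - k) with htl | rfl | htl
  · rw [if_pos htl.le, if_pos (by omega), show k + (t + 1) - 1 = k + t - 1 + 1 by omega]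
    exact p.adj _ (by omega)
  · rw [if_pos le_rfl, if_neg (by omega), show k + (l + 1 - k) - 1 = l by omega,
      show l + 2 - (l + 1 - k + 1) = k by omega]
    exact hlk
  · rw [if_neg (by omega), if_neg (by omega), show l + 2 - t = l + 2 - (t + 1) + 1 by omega]
    exact (p.adj _ (by omega)).symm

section NbrPositions

variable [DecidableRel G.Adj]

def nbrPositions : Finset ℕ := {i ∈ Icc 1 p.len | G.Adj (p.x 0) (p.x i)}

theorem mem_nbrPositions {i : ℕ} :
    i ∈ p.nbrPositions ↔ 1 ≤ i ∧ i ≤ p.len ∧ G.Adj (p.x 0) (p.x i) := by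
  simp [nbrPositions, and_assoc]

theorem IsLongest.card_filter_adj_le {p : PathIn G s} (hp : p.IsLongest) :
    #{w ∈ s | G.Adj (p.x 0) w} ≤ #p.nbrPositions := by
  classical
  calc _ ≤ #(p.nbrPositions.image p.x) := card_le_card fun w hw => by
        obtain ⟨hws, hadj⟩ := mem_filter.1 hw
        obtain ⟨i, hi, rfl⟩ := hp.exists_eq_of_adj hws hadj
        refine mem_image_of_mem _ (p.mem_nbrPositions.2 ⟨Nat.pos_of_ne_zero ?_, hi, hadj⟩)
        rintro rfl
        exact G.irrefl hadj
    _ ≤ _ := card_image_le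

end NbrPositions

structure Window (d m : ℕ) : Prop where
  even : m % 2 = 0
  two_le : 2 ≤ m
  le_len : m + d - 2 ≤ p.len
  adj_iff : ∀ i, 1 ≤ i → i ≤ p.len →
    (G.Adj (p.x 0) (p.x i) ↔ i % 2 = 1 ∧ i < d ∨ i % 2 = 0 ∧ m ≤ i ∧ i ≤ m + d - 2)

namespace Window

variable {p} {d m i : ℕ} (hw : p.Window d m)
include hw

theorem adj_odd (hi : i % 2 = 1) (hid : i < d) : G.Adj (p.x 0) (p.x i) :=
  (hw.adj_iff i (by omega) (by have := hw.le_len; have := hw.two_le; omega)).2 (.inl ⟨hi, hid⟩)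

theorem adj_even (hi : i % 2 = 0) (hmi : m ≤ i) (him : i ≤ m + d - 2) :
    G.Adj (p.x 0) (p.x i) :=
  (hw.adj_iff i (by have := hw.two_le; omega) (by have := hw.le_len; omega)).2
    (.inr ⟨hi, hmi, him⟩)

theorem mem_of_adj_even (hi : i % 2 = 0) (hi1 : 1 ≤ i) (hlen : i ≤ p.len)
    (h : G.Adj (p.x 0) (p.x i)) : m ≤ i ∧ i ≤ m + d - 2 := by
  have := (hw.adj_iff i hi1 hlen).1 h
  omega

end Window

end PathIn

structure LongEvenCycleFreeCore (G : SimpleGraph V) [DecidableRel G.Adj] (s : Finset V) (d : ℕ) :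
    Prop where
  four_le : 4 ≤ d
  even : d % 2 = 0
  le_degree : ∀ v ∈ s, d ≤ #{w ∈ s | G.Adj v w}
  not_hasCycleLength : ∀ n, n % 2 = 0 → d + 2 ≤ n → ¬ G.HasCycleLength n

namespace LongEvenCycleFreeCore

open PathIn

variable [DecidableRel G.Adj] {s : Finset V} {d : ℕ} (H : G.LongEvenCycleFreeCore s d)
  {p : PathIn G s}
include H

theorem lt_of_mem_nbrPositions {i : ℕ} (hi : i ∈ p.nbrPositions) (hodd : i % 2 = 1) : i < d := by
  obtain ⟨hi1, hil, hadj⟩ := p.mem_nbrPositions.1 hi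
  have := H.four_le
  have := H.even
  by_contra! hdi
  exact H.not_hasCycleLength _ (by omega) (by omega)
    (p.hasCycleLength_of_chords (a := i - 1) (b := i) (c := i) (by omega) le_rfl hil (by omega)
      (by simpa [show i - 1 + 1 = i by omega] using p.adj (i - 1) (by omega)) hadj.symm)

theorem le_of_mem_nbrPositions {i j : ℕ} (hi : i ∈ p.nbrPositions) (hj : j ∈ p.nbrPositions)
    (hij : i < j) (hpar : i % 2 = j % 2) : j ≤ i + d - 2 := by
  obtain ⟨hi1, -, hi⟩ := p.mem_nbrPositions.1 hi
  obtain ⟨-, hjl, hj⟩ := p.mem_nbrPositions.1 hj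
  have := H.even
  by_contra! hji
  exact H.not_hasCycleLength _ (by omega) (by omega)
    (p.hasCycleLength_of_chords (a := 0) (by omega) hij.le hjl (by omega) hi hj.symm)

theorem exists_window (hp : p.IsLongest) : ∃ m, p.Window d m := by
  have := H.four_le
  have := H.even
  obtain ⟨m, hmS, hm2, hmem⟩ := exists_window_of_le_card (S := p.nbrPositions) (by omega) H.even
    ((H.le_degree _ (p.mem 0 (Nat.zero_le _))).trans hp.card_filter_adj_le)
    (fun i hi => H.lt_of_mem_nbrPositions hi) (fun i hi j hj => H.le_of_mem_nbrPositions hi hj)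
  have htop := p.mem_nbrPositions.1 ((hmem _).2 (.inr ⟨by omega, by omega, le_rfl⟩))
  have := p.mem_nbrPositions.1 hmS
  refine ⟨m, hm2, by omega, htop.2.1, fun i h1 h2 => ?_⟩
  rw [← hmem, mem_nbrPositions]
  tauto

/-- Rotating at `e` keeps the parity of every position, so the window of the rotated path says
which odd positions the even vertex `x e` sees. -/
theorem adj_iff_lt_of_even_of_odd (hp : p.IsLongest) {m : ℕ} (hw : p.Window d m) {e o : ℕ}
    (he : e % 2 = 0) (hed : e + 2 ≤ d) (ho : o % 2 = 1) (hol : o ≤ p.len) :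
    G.Adj (p.x e) (p.x o) ↔ o < d := by
  have := H.even
  have := hw.le_len
  have := hw.two_le
  obtain ⟨m', hr⟩ := H.exists_window
    (hp.rotate e (by omega) (hw.adj_odd (i := e + 1) (by omega) (by omega)))
  rcases lt_or_gt_of_ne (show o ≠ e by omega) with hoe | heo
  · have := hr.adj_odd (i := e - o) (by omega) (by omega)
    rw [rotate_x_zero, rotate_x_of_le _ (by omega), Nat.sub_sub_self hoe.le] at this
    exact iff_of_true this (by omega)
  · have := hr.adj_iff o (by omega) hol
    rw [rotate_x_zero, rotate_x_of_lt _ heo] at this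
    rw [this]
    omega

/-- Rotating at a window position `k + 1 ∈ [d + 2, 2d - 2]` makes the new endpoint `x k` adjacent
to the even vertex `x (k + 1 - d)`, although `k ≥ d` is odd. -/
theorem two_mul_sub_two_lt_window_start (hp : p.IsLongest) {m : ℕ} (hw : p.Window d m)
    (hm4 : 4 ≤ m) : 2 * d - 2 < m := by
  have := H.four_le
  have := H.even
  have := hw.even
  have := hw.le_len
  by_contra! hsmall
  obtain ⟨k, hk2, hdk, hkd, hmk, hkm⟩ : ∃ k, k % 2 = 1 ∧ d + 1 ≤ k ∧ k ≤ 2 * d - 3 ∧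
      m ≤ k + 1 ∧ k + 1 ≤ m + d - 2 := by
    rcases le_total m (d + 2) with h | h
    exacts [⟨d + 1, by omega⟩, ⟨m - 1, by omega⟩]
  obtain ⟨mq, hq⟩ := H.exists_window
    (hp.rotate k (by omega) (hw.adj_even (i := k + 1) (by omega) hmk hkm))
  have hchord := hq.adj_odd (i := d - 1) (by omega) (by omega)
  rw [rotate_x_zero, rotate_x_of_le _ (by omega), show k - (d - 1) = k + 1 - d by omega]
    at hchord
  have := (H.adj_iff_lt_of_even_of_odd hp hw (by omega) (by omega) hk2 (by omega)).1 hchord.symm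
  omega

/-- Rotating at `m`, the new endpoint `x (m - 1)` sees `x m`, so its window starts at some
`mq ∈ [m - d + 2, m]`. If `mq < m`, its chord to `x (m - 1 - mq)` and `x 0 ~ x (m + d - 2)` close a
long even cycle; if `mq = m`, a second rotation at `m + 2` yields the chord `x (m + 1) ~ x (d - 3)`
of a band cycle of length `d + 2`. -/
theorem window_start_lt_two_mul (hp : p.IsLongest) {m : ℕ} (hw : p.Window d m) : m < 2 * d := by
  have hd := H.four_le
  have hd2 := H.even
  have hm2 := hw.even
  have hlen := hw.le_len
  by_contra! hlarge
  obtain ⟨k, rfl⟩ : ∃ k, m = k + 1 := ⟨m - 1, by omega⟩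
  have hpq := hp.rotate k (by omega) (hw.adj_even (i := k + 1) hm2 le_rfl (by omega))
  obtain ⟨mq, hq⟩ := H.exists_window hpq
  have hqm := hq.mem_of_adj_even (i := k + 1) hm2 (by omega) (by rw [rotate_len]; omega)
    (by rw [rotate_x_zero, rotate_x_of_lt _ (by omega)]; exact p.adj k (by omega))
  rcases lt_or_eq_of_le hqm.1 with hlt | rfl
  · have := hq.even
    have hchord := hq.adj_even (i := mq) hq.even le_rfl (by omega)
    rw [rotate_x_zero, rotate_x_of_le _ (by omega)] at hchord
    exact H.not_hasCycleLength _ (by omega) (by omega)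
      (p.hasCycleLength_of_chords (a := k - mq) (b := k) (c := k + 1 + d - 2) (by omega)
        (by omega) hlen (by omega) hchord.symm (hw.adj_even (by omega) (by omega) le_rfl).symm)
  · obtain ⟨mr, hr⟩ := H.exists_window (hpq.rotate (k + 2) (by rw [rotate_len]; omega)
      (hq.adj_even (i := k + 3) (by omega) (by omega) (by omega)))
    have hchord := hr.adj_odd (i := d - 1) (by omega) (by omega)
    rw [rotate_x_zero, rotate_x_of_le (t := d - 1) _ (by omega),
      rotate_x_of_lt (t := k + 2) _ (by omega),
      rotate_x_of_le (t := k + 2 - (d - 1)) _ (by omega),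
      show k - (k + 2 - (d - 1)) = d - 4 + 1 by omega] at hchord
    have hcross := (H.adj_iff_lt_of_even_of_odd hp hw (e := d - 4) (o := d - 1) (by omega)
      (by omega) (by omega) (by omega)).2 (by omega)
    exact H.not_hasCycleLength _ (by omega) (by omega)
      (p.hasCycleLength_of_band (k := d - 4) (l := d - 1) (m := k + 1) (by omega) (by omega)
        (by omega) (hw.adj_even hm2 le_rfl (by omega)) hchord hcross.symm)

theorem window_start_eq_two (hp : p.IsLongest) {m : ℕ} (hw : p.Window d m) : m = 2 := by
  have := H.even
  have := hw.even
  have := hw.two_le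
  by_contra hm
  have := H.two_mul_sub_two_lt_window_start hp hw (by omega)
  have := H.window_start_lt_two_mul hp hw
  omega

theorem adj_zero_of_le (hp : p.IsLongest) {i : ℕ} (hi1 : 1 ≤ i) (hid : i ≤ d) :
    G.Adj (p.x 0) (p.x i) := by
  have := H.even
  obtain ⟨m, hw⟩ := H.exists_window hp
  obtain rfl := H.window_start_eq_two hp hw
  rcases Nat.mod_two_eq_zero_or_one i with h | h
  · exact hw.adj_even h (by omega) (by omega)
  · exact hw.adj_odd h (by omega)

theorem exists_isNClique (hs : s.Nonempty) : ∃ t : Finset V, G.IsNClique (d + 1) t := by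
  classical
  obtain ⟨p, hp⟩ := exists_isLongest (G := G) hs
  have hdp : d ≤ p.len := by
    obtain ⟨m, hw⟩ := H.exists_window hp
    have := hw.le_len
    have := hw.two_le
    omega
  have hadj : ∀ a b, a < b → b ≤ d → G.Adj (p.x a) (p.x b) := by
    intro a b hab hbd
    have hpr := hp.rotate a (by omega) (H.adj_zero_of_le hp (i := a + 1) (by omega) (by omega))
    have := H.adj_zero_of_le hpr (i := b) (by omega) hbd
    rwa [rotate_x_zero, rotate_x_of_lt _ hab] at this
  refine ⟨(range (d + 1)).image p.x, ?_, ?_⟩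
  · simp only [coe_image, coe_range]
    rintro _ ⟨a, ha, rfl⟩ _ ⟨b, hb, rfl⟩ hne
    simp only [Set.mem_Iio] at ha hb
    rcases lt_trichotomy a b with h | rfl | h
    exacts [hadj a b h (by omega), absurd rfl hne, (hadj b a h (by omega)).symm]
  · rw [card_image_of_injOn fun a ha b hb h => p.injOn a (by simp at ha; omega) b
      (by simp at hb; omega) h, card_range]

end LongEvenCycleFreeCore

theorem colorable_of_forall_exists_degree_lt [Fintype V] [DecidableRel G.Adj] {d : ℕ}
    (h : ∀ s : Finset V, s.Nonempty → ∃ v ∈ s, #{w ∈ s | G.Adj v w} < d) : G.Colorable d := by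
  classical
  suffices ∀ s : Finset V, ∃ c : V → ℕ, (∀ v ∈ s, c v < d) ∧
      ∀ v ∈ s, ∀ w ∈ s, G.Adj v w → c v ≠ c w by
    obtain ⟨c, hlt, hc⟩ := this univ
    exact ⟨Coloring.mk (fun v => ⟨c v, hlt v (mem_univ v)⟩) fun {v w} hvw heq =>
      hc v (mem_univ v) w (mem_univ w) hvw (Fin.mk.inj_iff.1 heq)⟩
  intro s
  induction s using Finset.strongInduction with
  | H s ih =>
    rcases s.eq_empty_or_nonempty with rfl | hs
    · exact ⟨0, by simp, by simp⟩
    obtain ⟨v, hv, hdeg⟩ := h s hs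
    obtain ⟨c, hlt, hc⟩ := ih (s.erase v) (erase_ssubset hv)
    obtain ⟨k, hk, hfree⟩ : ∃ k < d, ∀ w ∈ s, G.Adj v w → c w ≠ k := by
      by_contra! hall
      have := card_le_card (t := {w ∈ s | G.Adj v w}.image c) fun k hk => by
        obtain ⟨w, hw, hvw, rfl⟩ := hall k (mem_range.1 hk)
        exact mem_image_of_mem c (mem_filter.2 ⟨hw, hvw⟩)
      have := card_image_le (s := {w ∈ s | G.Adj v w}) (f := c)
      simp only [card_range] at *
      omega
    refine ⟨Function.update c v k, fun w hw => ?_, fun a ha b hb hab => ?_⟩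
    · rcases eq_or_ne w v with rfl | hwv
      · simpa using hk
      · simpa [hwv] using hlt w (mem_erase.2 ⟨hwv, hw⟩)
    · simp only [Function.update_apply]
      split_ifs with hav hbv hbv
      · exact absurd (hav.trans hbv.symm ▸ hab) G.irrefl
      · exact (hfree b hb (hav ▸ hab)).symm
      · exact hfree a ha (hbv ▸ hab.symm)
      · exact hc a (mem_erase.2 ⟨hav, ha⟩) b (mem_erase.2 ⟨hbv, hb⟩) hab

end SimpleGraph

theorem chromatic_le_longest_even_cycle_general {V : Type*} [Fintype V]
    (G : SimpleGraph V) (le : ℕ)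
    (hle_even : Even le) (hle_cyc : G.HasCycleLength le)
    (hle_max : ∀ n, Even n → G.HasCycleLength n → n ≤ le)
    (hw : G.cliqueNum ≤ le) :
    G.chromaticNumber ≤ (le : ℕ∞) := by
  classical
  obtain ⟨v, c, hc, rfl⟩ := hle_cyc
  have h3 := hc.three_le_length
  have hle2 := Nat.even_iff.1 hle_even
  refine (colorable_of_forall_exists_degree_lt fun s hs => ?_).chromaticNumber_le
  by_contra! hdeg
  have H : G.LongEvenCycleFreeCore s c.length := by
    refine ⟨by omega, hle2, hdeg, fun n hn hln hcyc => ?_⟩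
    have := hle_max n (Nat.even_iff.2 hn) hcyc
    omega
  obtain ⟨t, ht⟩ := H.exists_isNClique hs
  have := ht.1.card_le_cliqueNum
  have := ht.2
  omega

/-- If `|L_e(G)| ≥ 3`, `ℓ_e(G)` is the length of a longest even cycle of
`G`, and `w(G) ≤ ℓ_e(G)`, then `χ(G) ≤ ℓ_e(G)`. -/
theorem chromatic_le_longest_even_cycle {V : Type*} [Fintype V]
    (G : SimpleGraph V) (le : ℕ)
    (hle_even : Even le) (hle_cyc : G.HasCycleLength le)
    (hle_max : ∀ n, Even n → G.HasCycleLength n → n ≤ le)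
    (hL : 3 ≤ (G.evenCycleLengths).ncard)
    (hw : G.cliqueNum ≤ le) :
    G.chromaticNumber ≤ (le : ℕ∞) :=
  chromatic_le_longest_even_cycle_general G le hle_even hle_cyc hle_max hw
end

section
/- Let t ≥ 1 and let H be a graph consisting of a cycle C_0 together with 2t − 2 chords of C_0 all incident with one common vertex x of C_0 (a chord is an edge joining two vertices of C_0 that are not adjacent on C_0). If H is non-bipartite, then H has at least t distinct odd cycle lengths. -/
/-!
Write `v₀ = x, v₁, …, v_{n-1}` for the Hamiltonian cycle and `P` for the set of positions of the
neighbours of `x`. Besides the `2t - 2` chord positions, `P` contains `1` and `n - 1`, so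
`#P ≥ 2t`. Two neighbours at positions `p < q` close, with the arc `v_p … v_q`, a cycle of length
`q - p + 2`, which is odd when `p` and `q` have different parities. If every position in `P` were
odd, the parity of the position would properly `2`-colour `H`; so `P` has elements of both
parities, and Cauchy–Davenport for its odd and even parts yields at least `#P - 1 ≥ 2t - 1`
distinct differences `b - a`, hence at least `t` distinct odd gaps `|b - a|`.
-/

open SimpleGraph

open Finset Pointwise

def Finset.oddGaps (S : Finset ℕ) : Finset ℕ :=
  ({a ∈ S | Even a} ×ˢ {b ∈ S | Odd b}).image fun ab ↦ ((ab.2 : ℤ) - ab.1).natAbs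

/-- By Cauchy–Davenport the odd part minus the even part of `S` has at least `#S - 1` elements,
and each gap is the absolute value of at most two of them. -/
theorem Finset.card_le_two_mul_card_oddGaps_add_one {S : Finset ℕ} (heven : ∃ a ∈ S, Even a)
    (hodd : ∃ b ∈ S, Odd b) : #S ≤ 2 * #S.oddGaps + 1 := by
  set E : Finset ℤ := {a ∈ S | Even a}.image (↑)
  set O : Finset ℤ := {b ∈ S | Odd b}.image (↑)
  have hE : #E = #{a ∈ S | Even a} := card_image_of_injective _ Nat.cast_injective
  have hO : #O = #{b ∈ S | Odd b} := card_image_of_injective _ Nat.cast_injective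
  have hEO : #E + #O = #S := by
    simp only [hE, hO, ← Nat.not_even_iff_odd, card_filter_add_card_filter_not]
  have hdiff : #S - 1 ≤ #(O - E) := by
    have := cauchy_davenport_of_isAddTorsionFree (s := O) (t := -E)
      (by obtain ⟨b, hb, hb'⟩ := hodd; exact ⟨b, mem_image_of_mem _ (by simp [hb, hb'])⟩)
      (by obtain ⟨a, ha, ha'⟩ := heven; exact ⟨-(a : ℤ), by simp [E, ha, ha']⟩)
    rwa [card_neg, ← sub_eq_add_neg, add_comm, hEO] at this
  have hfib : #(O - E) ≤ 2 * #((O - E).image Int.natAbs) := by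
    refine card_le_mul_card_image _ 2 fun n _ ↦ ?_
    calc #{d ∈ O - E | d.natAbs = n} ≤ #({(n : ℤ), -(n : ℤ)} : Finset ℤ) :=
          card_le_card fun d hd ↦ by
            simp only [mem_filter, Int.natAbs_eq_iff] at hd
            simpa using hd.2
      _ ≤ 2 := card_le_two
  have hsub : (O - E).image Int.natAbs ⊆ S.oddGaps := by
    intro n hn
    simp only [mem_image, mem_sub, O, E] at hn
    obtain ⟨_, ⟨_, ⟨b, hb, rfl⟩, _, ⟨a, ha, rfl⟩, rfl⟩, rfl⟩ := hn
    exact mem_image.mpr ⟨(a, b), mem_product.mpr ⟨ha, hb⟩, rfl⟩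
  have := card_le_card hsub
  omega

namespace SimpleGraph

variable {V : Type*}

theorem oddCycleLengths_finite (G : SimpleGraph V) [Fintype G.edgeSet] :
    G.oddCycleLengths.Finite :=
  (Set.finite_Iic #G.edgeFinset).subset fun _ ⟨_, _, _, hw, hn⟩ ↦
    hn ▸ hw.isTrail.length_le_card_edgeFinset

namespace Walk

variable {G : SimpleGraph V} {x : V}

theorem IsCycle.hasCycleLength_of_adj_getVert {c : G.Walk x x} (hc : c.IsCycle) {p q : ℕ}
    (hpq : p < q) (hp : G.Adj x (c.getVert p)) (hq : G.Adj x (c.getVert q)) :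
    G.HasCycleLength (q - p + 2) := by
  have hp0 : p ≠ 0 := by rintro rfl; simp at hp
  have hqn : q < c.length := by
    by_contra! h
    rw [c.getVert_of_length_le h] at hq
    exact hq.ne rfl
  let arc : G.Walk (c.getVert p) (c.getVert q) :=
    ((c.drop p).take (q - p)).copy rfl (by rw [drop_getVert, Nat.add_sub_cancel' hpq.le])
  have harc_path : arc.IsPath := by
    simpa [arc] using (hc.isPath_drop (Nat.pos_of_ne_zero hp0)).take (q - p)
  have harc_length : arc.length = q - p := by simp [arc]; omega
  have hx_arc : x ∉ arc.support := by
    rw [mem_support_iff_exists_getVert]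
    rintro ⟨i, hi, hil⟩
    simp only [arc, getVert_copy, take_getVert, drop_getVert] at hi
    rw [hc.getVert_endpoint_iff (by omega)] at hi
    omega
  have hpath : (arc.concat hq.symm).IsPath := harc_path.concat hx_arc hq.symm
  refine ⟨x, cons hp (arc.concat hq.symm), (cons_isCycle_iff _ _).mpr ⟨hpath, fun he ↦ ?_⟩, ?_⟩
  · have := hpath.length_eq_one_of_mem_edges (Sym2.eq_swap ▸ he)
    simp only [length_concat] at this
    omega
  · simp [harc_length]

theorem IsCycle.add_two_mem_oddCycleLengths {c : G.Walk x x} (hc : c.IsCycle) {S : Finset ℕ}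
    (hS : ∀ i ∈ S, G.Adj x (c.getVert i)) {d : ℕ} (hd : d ∈ S.oddGaps) :
    d + 2 ∈ G.oddCycleLengths := by
  simp only [Finset.oddGaps, mem_image, mem_product, mem_filter] at hd
  obtain ⟨⟨a, b⟩, ⟨⟨ha, ⟨k, rfl⟩⟩, hb, ⟨m, rfl⟩⟩, rfl⟩ := hd
  refine ⟨by rw [Nat.odd_iff]; omega, ?_⟩
  rcases lt_or_gt_of_ne (show k + k ≠ 2 * m + 1 by omega) with hab | hba
  · convert hc.hasCycleLength_of_adj_getVert hab (hS _ ha) (hS _ hb) using 2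
    omega
  · convert hc.hasCycleLength_of_adj_getVert hba (hS _ hb) (hS _ ha) using 2
    omega

section Hamiltonian

variable [DecidableEq V]

theorem IsHamiltonianCycle.exists_getVert_eq {c : G.Walk x x} (hc : c.IsHamiltonianCycle) (v : V) :
    ∃ i < c.length, c.getVert i = v := by
  obtain ⟨i, rfl, hi⟩ := mem_support_iff_exists_getVert.mp (hc.mem_support v)
  rcases hi.lt_or_eq with hi | rfl
  · exact ⟨i, hi, rfl⟩
  · exact ⟨0, hc.isCycle.three_le_length.trans_lt' (by norm_num), by simp⟩

/-- The parity of the position on `c` is a proper `2`-colouring. -/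
theorem IsHamiltonianCycle.isBipartite_of_forall_adj_odd {c : G.Walk x x}
    (hc : c.IsHamiltonianCycle) (hinc : ∀ e ∈ G.edgeSet, e ∉ c.edges → x ∈ e)
    (hodd : ∀ i < c.length, G.Adj x (c.getVert i) → Odd i) : G.IsBipartite := by
  choose pos hpos_lt hpos using hc.exists_getVert_eq
  have pos_getVert : ∀ i < c.length, pos (c.getVert i) = i := fun i hi ↦
    hc.isCycle.getVert_injOn' (by simp; have := hpos_lt (c.getVert i); omega)
      (by simp; omega) (hpos _)
  have pos_x : pos x = 0 := by
    simpa using pos_getVert 0 (hc.isCycle.three_le_length.trans_lt' (by norm_num))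
  have hadj_x : ∀ v, G.Adj x v → Odd (pos v) := fun v hv ↦ hodd _ (hpos_lt v) (by rwa [hpos])
  have hstep : ∀ i < c.length, (Even (pos (c.getVert i)) ↔ ¬Even (pos (c.getVert (i + 1)))) := by
    intro i hi
    rcases (Nat.add_one_le_of_lt hi).lt_or_eq with hi' | hi'
    · rw [pos_getVert i hi, pos_getVert (i + 1) hi', Nat.even_add_one, not_not]
    · have hx : c.getVert (i + 1) = x := by rw [hi', getVert_length]
      have := hadj_x _ (hx ▸ c.adj_getVert_succ hi).symm
      simp [hx, pos_x, Nat.not_even_iff_odd, this]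
  have hvalid : ∀ {u v}, G.Adj u v → (Even (pos u) ↔ ¬Even (pos v)) := by
    intro u v huv
    by_cases he : s(u, v) ∈ c.edges
    · obtain ⟨i, hi, hei⟩ := (mk_mem_edges_iff_exists c).mp he
      have := hstep i hi
      rcases Sym2.eq_iff.mp hei with ⟨rfl, rfl⟩ | ⟨rfl, rfl⟩ <;> tauto
    · rcases Sym2.mem_iff.mp (hinc _ huv he) with rfl | rfl
      · simp [pos_x, Nat.not_even_iff_odd, hadj_x v huv]
      · simp [pos_x, hadj_x u huv.symm]
  have col : G.Coloring Bool := Coloring.mk (fun v ↦ decide (Even (pos v))) fun huv ↦ by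
    simp only [ne_eq, decide_eq_decide]
    have := hvalid huv
    tauto
  simpa using col.colorable

theorem IsHamiltonianCycle.card_chords_add_two_le [Fintype V] [DecidableRel G.Adj]
    {c : G.Walk x x} (hc : c.IsHamiltonianCycle)
    (hinc : ∀ e ∈ G.edgeFinset \ c.edges.toFinset, x ∈ e) :
    #(G.edgeFinset \ c.edges.toFinset) + 2 ≤ #{i ∈ range c.length | G.Adj x (c.getVert i)} := by
  set P := {i ∈ range c.length | G.Adj x (c.getVert i)}
  have hn := hc.isCycle.three_le_length
  have hnil := hc.isCycle.not_nil
  have h1 : 1 ∈ P :=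
    mem_filter.mpr ⟨mem_range.mpr (by omega), adj_snd hnil⟩
  have hn1 : c.length - 1 ∈ P :=
    mem_filter.mpr ⟨mem_range.mpr (by omega), (adj_penultimate hnil).symm⟩
  have hsub : G.edgeFinset \ c.edges.toFinset ⊆
      ((P.erase (c.length - 1)).erase 1).image fun i ↦ s(x, c.getVert i) := by
    intro e he
    obtain ⟨u, rfl⟩ := Sym2.mem_iff_exists.mp (hinc e he)
    rw [mem_sdiff, mem_edgeFinset, List.mem_toFinset, SimpleGraph.mem_edgeSet] at he
    obtain ⟨i, hi, rfl⟩ := hc.exists_getVert_eq u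
    have hi1 : i ≠ 1 := by rintro rfl; exact he.2 (mk_start_snd_mem_edges hnil)
    have hin : i ≠ c.length - 1 := by
      rintro rfl; exact he.2 (Sym2.eq_swap ▸ mk_penultimate_end_mem_edges hnil)
    exact mem_image.mpr ⟨i, by simp [P, hi, hi1, hin, he.1], rfl⟩
  calc #(G.edgeFinset \ c.edges.toFinset) + 2
      ≤ #((P.erase (c.length - 1)).erase 1) + 2 := by
        gcongr; exact (card_le_card hsub).trans card_image_le
    _ = #P := by
        rw [← card_erase_add_one hn1, ← card_erase_add_one (mem_erase.mpr ⟨by omega, h1⟩)]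

end Hamiltonian

end Walk

end SimpleGraph

open Walk

theorem odd_cycle_lengths_of_chords_general {V : Type*} [Fintype V] [DecidableEq V]
    (H : SimpleGraph V) [DecidableRel H.Adj] (t : ℕ)
    (x : V) (c : H.Walk x x) (hc : c.IsHamiltonianCycle)
    (hchords : (H.edgeFinset \ c.edges.toFinset).card = 2 * t - 2)
    (hinc : ∀ e ∈ H.edgeFinset \ c.edges.toFinset, x ∈ e)
    (hnonbip : (H.oddCycleLengths).Nonempty) :
    t ≤ (H.oddCycleLengths).ncard := by
  have hP := hc.card_chords_add_two_le hinc
  set P := {i ∈ range c.length | H.Adj x (c.getVert i)}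
  have hodd : ∃ b ∈ P, Odd b := ⟨1, mem_filter.mpr ⟨mem_range.mpr
    (by have := hc.isCycle.three_le_length; omega), adj_snd hc.isCycle.not_nil⟩, odd_one⟩
  have heven : ∃ a ∈ P, Even a := by
    by_contra! hP_odd
    have hbip := hc.isBipartite_of_forall_adj_odd
      (fun e he hec ↦ hinc e (by simp [he, hec]))
      (fun i hi hadj ↦ Nat.not_even_iff_odd.mp (hP_odd i (mem_filter.mpr ⟨mem_range.mpr hi, hadj⟩)))
    obtain ⟨ℓ, hℓ, v, w, -, rfl⟩ := hnonbip
    exact Nat.not_even_iff_odd.mpr hℓ (two_colorable_iff_forall_loop_even.mp hbip v w)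
  have hgaps : ↑(P.oddGaps.image (· + 2)) ⊆ H.oddCycleLengths := by
    simp only [coe_image, Set.image_subset_iff]
    exact fun d hd ↦ hc.isCycle.add_two_mem_oddCycleLengths (fun i hi ↦ (mem_filter.mp hi).2) hd
  calc t ≤ #P.oddGaps := by
        have := card_le_two_mul_card_oddGaps_add_one heven hodd
        omega
    _ = #(P.oddGaps.image (· + 2)) := (card_image_of_injective _ (add_left_injective 2)).symm
    _ ≤ H.oddCycleLengths.ncard := by
        rw [← Set.ncard_coe_finset]
        exact Set.ncard_le_ncard hgaps H.oddCycleLengths_finite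

/-- Let `H` consist of a (spanning) cycle `c` together with `2t - 2`
chords all incident with the vertex `x` (`t ≥ 1`). If `H` is non-bipartite, then `H` has
at least `t` distinct odd cycle lengths. -/
theorem odd_cycle_lengths_of_chords {V : Type*} [Fintype V] [DecidableEq V]
    (H : SimpleGraph V) [DecidableRel H.Adj] (t : ℕ) (ht : 1 ≤ t)
    (x : V) (c : H.Walk x x) (hc : c.IsHamiltonianCycle)
    (hchords : (H.edgeFinset \ c.edges.toFinset).card = 2 * t - 2)
    (hinc : ∀ e ∈ H.edgeFinset \ c.edges.toFinset, x ∈ e)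
    (hnonbip : (H.oddCycleLengths).Nonempty) :
    t ≤ (H.oddCycleLengths).ncard :=
  odd_cycle_lengths_of_chords_general H t x c hc hchords hinc hnonbip
end

section
/- Let k ≥ 1 and let H be a graph consisting of an even cycle C_0 together with 2k − 1 chords of C_0 all incident with one common vertex x of C_0 (a chord is an edge joining two vertices of C_0 that are not adjacent on C_0). Suppose H has at most k distinct even cycle lengths. Then there is an odd integer O_1 ≥ 3 such that the length of C_0 equals k(O_1 − 1) + 2, C_0 is a longest even cycle of H, and the set of even cycle lengths of H is exactly { i(O_1 − 1) + 2 : 1 ≤ i ≤ k }. -/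
open SimpleGraph

/-!
Let the chords join `x` to the vertices at distance `p ∈ P` from `x` along `C₀`, where
`|P| = 2k - 1` and `n = |C₀|`. A chord at `p` closes cycles of lengths `p + 1` and `n - p + 1`,
two chords at `p < q` close one of length `q - p + 2`, and apart from `n` there are at most `k - 1`
even cycle lengths, all below `n`. The odd positions `p` give distinct even lengths `p + 1`, and
the even positions `q` give distinct even lengths `q - e + 2`, `e` the least even position; hence
there are `k` even and `k - 1` odd positions and each family realises every even length below `n`.
The even positions shifted by `e` are then closed under differences, so they form an arithmetic
progression `0, g, …, (k - 1)g` and the even lengths below `n` are `ig + 2`, `1 ≤ i < k`. For an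
odd position `p` both `p + 1` and `n - p + 1` have this form, so `n - 2 = (i + j)g`; the odd
positions with `p + 1 = (k - 1)g + 2` and `p + 1 = g + 2` give `n = kg + 2`, and `O₁ = g + 1`.
-/

open Finset

lemma Nat.injOn_sub_Ici (e : ℕ) : Set.InjOn (· - e) (Set.Ici e) :=
  fun a ha b hb hab ↦ by
    simp only [Set.mem_Ici] at ha hb hab
    omega

lemma dvd_of_forall_sub_mem {S : Set ℕ} (hsub : ∀ a ∈ S, ∀ b ∈ S, a ≤ b → b - a ∈ S) {g : ℕ}
    (hg : g ∈ S) (hg0 : 0 < g) (hmin : ∀ b ∈ S, 0 < b → g ≤ b) {b : ℕ} (hb : b ∈ S) : g ∣ b := by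
  induction b using Nat.strong_induction_on with
  | _ b ih =>
    rcases Nat.eq_zero_or_pos b with rfl | hb0
    · exact dvd_zero g
    have hgb := hmin b hb hb0
    have := ih (b - g) (by omega) (hsub g hg b hb hgb)
    simpa [Nat.sub_add_cancel hgb] using Nat.dvd_add this (dvd_refl g)

lemma mul_mem_of_forall_sub_mem {S : Set ℕ} (hsub : ∀ a ∈ S, ∀ b ∈ S, a ≤ b → b - a ∈ S)
    {g m i : ℕ} (hg : g ∈ S) (hm : m * g ∈ S) (hi : i ≤ m) : i * g ∈ S := by
  obtain ⟨d, rfl⟩ := Nat.exists_eq_add_of_le hi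
  induction d with
  | zero => simpa using hm
  | succ d ih =>
    refine ih ?_ (Nat.le_add_right i d)
    have := hsub g hg _ hm (Nat.le_mul_of_pos_left g (by omega))
    rwa [← add_assoc, add_one_mul, Nat.add_sub_cancel] at this

lemma Finset.exists_eq_image_mul_of_sub_mem {B : Finset ℕ} (h0 : 0 ∈ B)
    (hsub : ∀ a ∈ B, ∀ b ∈ B, a ≤ b → b - a ∈ B) :
    ∃ g, 0 < g ∧ B = (range B.card).image (· * g) := by
  by_cases hB : B.erase 0 = ∅
  · refine ⟨1, one_pos, ?_⟩
    obtain rfl : B = {0} := by rw [← insert_erase h0, hB]; rfl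
    rfl
  set g := (B.erase 0).min' (nonempty_iff_ne_empty.mpr hB)
  have hgB : g ∈ B.erase 0 := min'_mem _ _
  have hg : 0 < g := Nat.pos_of_ne_zero (ne_of_mem_erase hgB)
  have hdvd : ∀ b ∈ B, g ∣ b := fun b ↦ dvd_of_forall_sub_mem hsub (mem_of_mem_erase hgB) hg
    (fun b hb hb0 ↦ min'_le _ _ (mem_erase.mpr ⟨hb0.ne', hb⟩))
  obtain ⟨m, hm⟩ := hdvd _ (max'_mem B ⟨0, h0⟩)
  have hBm : B = (range (m + 1)).image (· * g) := by
    ext b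
    simp only [mem_image, mem_range, Nat.lt_succ_iff]
    refine ⟨fun hb ↦ ?_, ?_⟩
    · obtain ⟨i, rfl⟩ := hdvd b hb
      refine ⟨i, Nat.le_of_mul_le_mul_left ?_ hg, mul_comm i g⟩
      rw [← hm]
      exact le_max' B _ hb
    · rintro ⟨i, hi, rfl⟩
      refine mul_mem_of_forall_sub_mem hsub (mem_of_mem_erase hgB) ?_ hi
      rw [mul_comm, ← hm]
      exact max'_mem B _
  have hcard : B.card = m + 1 := by
    rw [hBm, card_image_of_injective _ (mul_left_injective₀ hg.ne'), card_range]
  exact ⟨g, hg, hcard ▸ hBm⟩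

/-- `L` contains the length `n` of a cycle `C`, the lengths `p + 1` and `n - p + 1` of the two
cycles through a chord from a vertex `x` of `C` to the vertex at distance `p ∈ P` from `x` along
`C`, and the length `q - p + 2` of the cycle through two such chords; `L` lies in `[3, n]`. -/
structure ChordedCycleLengths (L : Set ℕ) (n : ℕ) (P : Finset ℕ) : Prop where
  length_mem : n ∈ L
  three_le : ∀ m ∈ L, 3 ≤ m
  le_length : ∀ m ∈ L, m ≤ n
  chord_mem : ∀ p ∈ P, p + 1 ∈ L ∧ n - p + 1 ∈ L
  two_chords_mem : ∀ p ∈ P, ∀ q ∈ P, p < q → q - p + 2 ∈ L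

namespace ChordedCycleLengths

variable {L : Set ℕ} {n k g p q : ℕ} {P : Finset ℕ}

lemma two_le_and_add_two_le (h : ChordedCycleLengths L n P) (hp : p ∈ P) :
    2 ≤ p ∧ p + 2 ≤ n := by
  have h₁ := h.three_le _ (h.chord_mem p hp).1
  have h₂ := h.three_le _ (h.chord_mem p hp).2
  omega

open Classical in
noncomputable def evenBelow (L : Set ℕ) (n : ℕ) : Finset ℕ :=
  {m ∈ range n | Even m ∧ m ∈ L}

lemma mem_evenBelow {m : ℕ} : m ∈ evenBelow L n ↔ m < n ∧ Even m ∧ m ∈ L := by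
  simp [evenBelow]

lemma add_one_mem_evenBelow (h : ChordedCycleLengths L n P) (hp : p ∈ P) (hodd : ¬Even p) :
    p + 1 ∈ evenBelow L n := by
  have := h.two_le_and_add_two_le hp
  exact mem_evenBelow.mpr ⟨by omega, Nat.even_add_one.mpr hodd, (h.chord_mem p hp).1⟩

lemma sub_add_one_mem_evenBelow (h : ChordedCycleLengths L n P) (hn : Even n) (hp : p ∈ P)
    (hodd : ¬Even p) : n - p + 1 ∈ evenBelow L n := by
  have := h.two_le_and_add_two_le hp
  refine mem_evenBelow.mpr ⟨by omega, ?_, (h.chord_mem p hp).2⟩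
  rw [Nat.even_add_one, Nat.even_sub (by omega)]
  tauto

lemma sub_add_two_mem_evenBelow (h : ChordedCycleLengths L n P) (hp : p ∈ P) (hq : q ∈ P)
    (hpq : p < q) (hpe : Even p) (hqe : Even q) : q - p + 2 ∈ evenBelow L n := by
  have := h.two_le_and_add_two_le hp
  have := h.two_le_and_add_two_le hq
  refine mem_evenBelow.mpr ⟨by omega, ?_, h.two_chords_mem p hp q hq hpq⟩
  rw [Nat.even_add, Nat.even_sub hpq.le]
  simp [hpe, hqe]

lemma card_filter_not_even_le (h : ChordedCycleLengths L n P) :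
    (P.filter (¬Even ·)).card ≤ (evenBelow L n).card :=
  card_le_card_of_injOn (· + 1) (fun _ hp ↦ h.add_one_mem_evenBelow (mem_filter.mp hp).1
    (mem_filter.mp hp).2) (fun _ _ _ _ ↦ Nat.add_right_cancel)

lemma mapsTo_sub_add_two (h : ChordedCycleLengths L n P) {e : ℕ}
    (he : IsLeast (P.filter Even : Set ℕ) e) :
    Set.MapsTo (· - e + 2) ((P.filter Even).erase e) (evenBelow L n) := fun q hq ↦ by
  obtain ⟨hqe, hq⟩ := mem_erase.mp hq
  have he' := mem_filter.mp he.1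
  exact h.sub_add_two_mem_evenBelow he'.1 (mem_filter.mp hq).1 ((he.2 hq).lt_of_ne' hqe) he'.2
    (mem_filter.mp hq).2

lemma injOn_sub_add_two {e : ℕ} (he : IsLeast (P.filter Even : Set ℕ) e) :
    Set.InjOn (· - e + 2) ((P.filter Even).erase e) :=
  ((add_left_injective 2).comp_injOn (Nat.injOn_sub_Ici e)).mono
    fun _ hq ↦ he.2 (mem_of_mem_erase hq)

lemma card_filter_even_le (h : ChordedCycleLengths L n P) :
    (P.filter Even).card ≤ (evenBelow L n).card + 1 := by
  rcases (P.filter Even).eq_empty_or_nonempty with hPe | hPe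
  · simp [hPe]
  have he := isLeast_min' _ hPe
  have := card_le_card_of_injOn _ (h.mapsTo_sub_add_two he) (injOn_sub_add_two he)
  rw [card_erase_of_mem he.1] at this
  omega

variable {e : ℕ}

lemma surjOn_sub_add_two (h : ChordedCycleLengths L n P)
    (he : IsLeast (P.filter Even : Set ℕ) e)
    (hcard : (evenBelow L n).card + 1 ≤ (P.filter Even).card) :
    Set.SurjOn (· - e + 2) ((P.filter Even).erase e) (evenBelow L n) :=
  surjOn_of_injOn_of_card_le _ (h.mapsTo_sub_add_two he) (injOn_sub_add_two he)
    (by rw [card_erase_of_mem he.1]; omega)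

lemma sub_mem_image_sub (h : ChordedCycleLengths L n P) (he : IsLeast (P.filter Even : Set ℕ) e)
    (hcard : (evenBelow L n).card + 1 ≤ (P.filter Even).card) :
    ∀ a ∈ (P.filter Even).image (· - e), ∀ b ∈ (P.filter Even).image (· - e), a ≤ b →
      b - a ∈ (P.filter Even).image (· - e) := by
  simp only [mem_image]
  rintro _ ⟨p, hp, rfl⟩ _ ⟨q, hq, rfl⟩ hpq
  have := he.2 hp
  have := he.2 hq
  rcases (show p ≤ q by omega).lt_or_eq with hpq | rfl
  · have hqp := h.sub_add_two_mem_evenBelow (mem_filter.mp hp).1 (mem_filter.mp hq).1 hpq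
      (mem_filter.mp hp).2 (mem_filter.mp hq).2
    obtain ⟨r, hr, hr'⟩ := h.surjOn_sub_add_two he hcard hqp
    beta_reduce at hr'
    exact ⟨r, mem_of_mem_erase hr, by omega⟩
  · exact ⟨e, he.1, by omega⟩

lemma exists_mem_evenBelow_iff (h : ChordedCycleLengths L n P)
    (hcard : (evenBelow L n).card + 1 ≤ (P.filter Even).card) :
    ∃ g, 0 < g ∧
      ∀ m, m ∈ evenBelow L n ↔ ∃ i, 1 ≤ i ∧ i < (P.filter Even).card ∧ m = i * g + 2 := by
  have he := isLeast_min' (P.filter Even) (card_pos.mp (by omega))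
  set e := (P.filter Even).min' _
  obtain ⟨g, hg, hB⟩ := exists_eq_image_mul_of_sub_mem (B := (P.filter Even).image (· - e))
    (mem_image.mpr ⟨e, he.1, Nat.sub_self e⟩) (h.sub_mem_image_sub he hcard)
  rw [card_image_of_injOn ((Nat.injOn_sub_Ici e).mono he.2)] at hB
  have hBmem : ∀ r ∈ P.filter Even, ∃ i < (P.filter Even).card, i * g = r - e := fun r hr ↦ by
    have := hB ▸ mem_image_of_mem (· - e) hr
    simpa using this
  refine ⟨g, hg, fun m ↦ ?_⟩
  constructor
  · intro hm
    obtain ⟨r, hr, rfl⟩ := h.surjOn_sub_add_two he hcard hm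
    beta_reduce
    obtain ⟨hre, hr⟩ := mem_erase.mp hr
    obtain ⟨i, hi, hig⟩ := hBmem r hr
    have := he.2 hr
    refine ⟨i, Nat.pos_of_ne_zero ?_, hi, by omega⟩
    rintro rfl
    omega
  · rintro ⟨i, hi, hik, rfl⟩
    obtain ⟨r, hr, hri⟩ := mem_image.mp (hB ▸ mem_image_of_mem (· * g) (mem_range.mpr hik))
    beta_reduce at hri
    have := he.2 hr
    have := Nat.mul_le_mul_right g hi
    simpa [hri] using h.mapsTo_sub_add_two he (mem_erase.mpr ⟨by omega, hr⟩)

lemma length_eq_mul_add_two (h : ChordedCycleLengths L n P) (hn : Even n) (hk : 2 ≤ k)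
    (hg : ∀ m, m ∈ evenBelow L n ↔ ∃ i, 1 ≤ i ∧ i < k ∧ m = i * g + 2)
    (hcard : (evenBelow L n).card ≤ (P.filter (¬Even ·)).card) : n = k * g + 2 := by
  have hM : Set.SurjOn (· + 1) (P.filter (¬Even ·)) (evenBelow L n) :=
    surjOn_of_injOn_of_card_le _
      (fun _ hp ↦ h.add_one_mem_evenBelow (mem_filter.mp hp).1 (mem_filter.mp hp).2)
      (fun _ _ _ _ ↦ Nat.add_right_cancel) hcard
  have hsum : ∀ i, 1 ≤ i → i < k → ∃ j, 1 ≤ j ∧ j < k ∧ n = (i + j) * g + 2 := by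
    intro i hi hik
    obtain ⟨p, hp, hpi⟩ := hM ((hg _).mpr ⟨i, hi, hik, rfl⟩)
    beta_reduce at hpi
    obtain ⟨hpP, hodd⟩ := mem_filter.mp hp
    obtain ⟨j, hj, hjk, hpj⟩ := (hg _).mp (h.sub_add_one_mem_evenBelow hn hpP hodd)
    have := h.two_le_and_add_two_le hpP
    exact ⟨j, hj, hjk, by rw [add_mul]; omega⟩
  obtain ⟨j, hj, -, hn₁⟩ := hsum (k - 1) (by omega) (by omega)
  obtain ⟨j', -, hj', hn₂⟩ := hsum 1 le_rfl hk
  have := Nat.mul_le_mul_right g (show k ≤ k - 1 + j by omega)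
  have := Nat.mul_le_mul_right g (show 1 + j' ≤ k by omega)
  omega

lemma setOf_even_mem_eq_insert (h : ChordedCycleLengths L n P) (hn : Even n) :
    {m | Even m ∧ m ∈ L} = insert n (evenBelow L n : Set ℕ) := by
  ext m
  simp only [Set.mem_ofPred_eq, Set.mem_insert_iff, mem_coe, mem_evenBelow]
  constructor
  · rintro ⟨hm, hmL⟩
    rcases (h.le_length m hmL).lt_or_eq with hlt | rfl
    exacts [Or.inr ⟨hlt, hm, hmL⟩, Or.inl rfl]
  · rintro (rfl | ⟨-, hm, hmL⟩)
    exacts [⟨hn, h.length_mem⟩, ⟨hm, hmL⟩]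

theorem exists_evenLengths_eq (h : ChordedCycleLengths L n P) (hn : Even n) (hk : 1 ≤ k)
    (hP : P.card = 2 * k - 1) (hL : {m | Even m ∧ m ∈ L}.ncard ≤ k) :
    ∃ g, Even g ∧ 2 ≤ g ∧ n = k * g + 2 ∧
      {m | Even m ∧ m ∈ L} = {m | ∃ i, 1 ≤ i ∧ i ≤ k ∧ m = i * g + 2} := by
  have hE := h.setOf_even_mem_eq_insert hn
  have hM : (evenBelow L n).card + 1 ≤ k := by
    rwa [hE, Set.ncard_insert_of_notMem (by simp [mem_evenBelow]), Set.ncard_coe_finset] at hL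
  have hodd := h.card_filter_not_even_le
  have heven := h.card_filter_even_le
  have hsplit := P.card_filter_add_card_filter_not Even
  obtain ⟨g, hg, hge, hMg, hng⟩ : ∃ g, 0 < g ∧ Even g ∧
      (∀ m, m ∈ evenBelow L n ↔ ∃ i, 1 ≤ i ∧ i < k ∧ m = i * g + 2) ∧ n = k * g + 2 := by
    rcases hk.eq_or_lt with rfl | hk
    · have := h.three_le n h.length_mem
      have hM0 : evenBelow L n = ∅ := card_eq_zero.mp (by omega)
      refine ⟨n - 2, by omega, (Nat.even_sub (by omega)).mpr (by simp [hn]), fun m ↦ ?_, by omega⟩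
      simp only [hM0, notMem_empty, false_iff]
      omega
    · obtain ⟨g, hg, hMg⟩ := h.exists_mem_evenBelow_iff (by omega)
      rw [show (P.filter Even).card = k by omega] at hMg
      have hg2 := (mem_evenBelow.mp ((hMg (g + 2)).mpr ⟨1, le_rfl, hk, by ring⟩)).2.1
      exact ⟨g, hg, (Nat.even_add.mp hg2).mpr even_two, hMg,
        h.length_eq_mul_add_two hn hk hMg (by omega)⟩
  refine ⟨g, hge, by grind, hng, ?_⟩
  rw [hE]
  ext m
  simp only [Set.mem_insert_iff, mem_coe, hMg, Set.mem_ofPred_eq]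
  constructor
  · rintro (rfl | ⟨i, hi, hik, rfl⟩)
    exacts [⟨k, hk, le_rfl, hng⟩, ⟨i, hi, hik.le, rfl⟩]
  · rintro ⟨i, hi, hik, rfl⟩
    rcases hik.lt_or_eq with hik | rfl
    exacts [Or.inr ⟨i, hi, hik, rfl⟩, Or.inl hng.symm]

end ChordedCycleLengths

namespace SimpleGraph

variable {V : Type*} {G : SimpleGraph V} {x : V}

lemma HasCycleLength.three_le {n : ℕ} (h : G.HasCycleLength n) : 3 ≤ n := by
  obtain ⟨_, c, hc, rfl⟩ := h
  exact hc.three_le_length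

lemma HasCycleLength.le_card [Fintype V] {n : ℕ} (h : G.HasCycleLength n) :
    n ≤ Fintype.card V := by
  obtain ⟨_, c, hc, rfl⟩ := h
  rw [← c.length_tail_add_one hc.not_nil]
  exact hc.isPath_tail.length_lt

lemma Walk.IsPath.hasCycleLength_length_add_one {u : V} {w : G.Walk u x} (hw : w.IsPath)
    (hxu : G.Adj x u) (he : s(x, u) ∉ w.edges) : G.HasCycleLength (w.length + 1) :=
  ⟨x, .cons hxu w, (Walk.cons_isCycle_iff w hxu).mpr ⟨hw, he⟩, rfl⟩

lemma Walk.IsPath.hasCycleLength_length_add_two {u v : V} {w : G.Walk u v} (hw : w.IsPath)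
    (hx : x ∉ w.support) (hxu : G.Adj x u) (hvx : G.Adj v x) (huv : u ≠ v) :
    G.HasCycleLength (w.length + 2) := by
  have he : s(x, u) ∉ (w.concat hvx).edges := by
    rw [Walk.edges_concat, List.concat_eq_append, List.mem_append, List.mem_singleton, not_or]
    refine ⟨fun h ↦ hx (w.fst_mem_support_of_mem_edges h), fun h ↦ ?_⟩
    rcases Sym2.eq_iff.mp h with ⟨-, hux⟩ | ⟨-, huv'⟩
    exacts [hxu.ne hux.symm, huv huv']
  simpa using (hw.concat hx hvx).hasCycleLength_length_add_one hxu he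

namespace Walk.IsCycle

variable {c : G.Walk x x} {p q : ℕ}

lemma hasCycleLength_add_one_of_chord (hc : c.IsCycle) (hp : p < c.length)
    (hadj : G.Adj x (c.getVert p)) (he : s(x, c.getVert p) ∉ c.edges) : G.HasCycleLength (p + 1) := by
  have he' : s(x, c.getVert p) ∉ (c.take p).reverse.edges := by
    rw [edges_reverse, List.mem_reverse, edges_take]
    exact fun h ↦ he (List.mem_of_mem_take h)
  simpa [hp.le] using (hc.isPath_take hp).reverse.hasCycleLength_length_add_one hadj he'

lemma hasCycleLength_sub_add_one_of_chord (hc : c.IsCycle) (hp : 0 < p)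
    (hadj : G.Adj x (c.getVert p)) (he : s(x, c.getVert p) ∉ c.edges) : G.HasCycleLength (c.length - p + 1) := by
  have he' : s(x, c.getVert p) ∉ (c.drop p).edges := by
    rw [edges_drop]
    exact fun h ↦ he (List.mem_of_mem_drop h)
  simpa using (hc.isPath_drop hp).hasCycleLength_length_add_one hadj he'

lemma hasCycleLength_sub_add_two_of_adj (hc : c.IsCycle) (hp : 0 < p) (hpq : p < q)
    (hq : q < c.length) (hxp : G.Adj x (c.getVert p)) (hxq : G.Adj x (c.getVert q)) :
    G.HasCycleLength (q - p + 2) := by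
  have hv : (c.drop p).getVert (q - p) = c.getVert q := by
    rw [drop_getVert, Nat.add_sub_cancel' hpq.le]
  have hx : x ∉ ((c.drop p).take (q - p)).support := by
    rw [mem_support_iff_exists_getVert]
    rintro ⟨i, hi, hile⟩
    rw [take_getVert, drop_getVert, hc.getVert_endpoint_iff (by simp at hile ⊢; omega)] at hi
    simp at hile
    omega
  have huv : c.getVert p ≠ (c.drop p).getVert (q - p) := by
    rw [hv]
    exact fun h ↦ hpq.ne (hc.getVert_injOn (by simp; omega) (by simp; omega) h)
  simpa [show q - p ≤ c.length - p by omega] using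
    ((hc.isPath_drop hp).take _).hasCycleLength_length_add_two hx hxp (hv ▸ hxq.symm) huv

end Walk.IsCycle

namespace Walk.IsHamiltonianCycle

variable [Fintype V] [DecidableEq V] {c : G.Walk x x}

lemma chordedCycleLengths (hc : c.IsHamiltonianCycle) {P : Finset ℕ}
    (hP : ∀ p ∈ P, p < c.length ∧ G.Adj x (c.getVert p) ∧ s(x, c.getVert p) ∉ c.edges) :
    ChordedCycleLengths {m | G.HasCycleLength m} c.length P := by
  have hpos : ∀ p ∈ P, 0 < p := fun p hp ↦ Nat.pos_of_ne_zero fun h ↦ by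
    simpa [h] using (hP p hp).2.1
  refine ⟨⟨x, c, hc.isCycle, rfl⟩, fun m hm ↦ hm.three_le, fun m hm ↦ hc.length_eq ▸ hm.le_card,
    fun p hp ↦ ?_, fun p hp q hq hpq ↦ ?_⟩
  · obtain ⟨hpn, hadj, he⟩ := hP p hp
    exact ⟨hc.isCycle.hasCycleLength_add_one_of_chord hpn hadj he,
      hc.isCycle.hasCycleLength_sub_add_one_of_chord (hpos p hp) hadj he⟩
  · exact hc.isCycle.hasCycleLength_sub_add_two_of_adj (hpos p hp) hpq (hP q hq).1 (hP p hp).2.1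
      (hP q hq).2.1

variable [DecidableRel G.Adj]

lemma card_filter_chord_eq (hc : c.IsHamiltonianCycle)
    (hinc : ∀ e ∈ G.edgeFinset \ c.edges.toFinset, x ∈ e) :
    {p ∈ range c.length | s(x, c.getVert p) ∈ G.edgeFinset \ c.edges.toFinset}.card =
      (G.edgeFinset \ c.edges.toFinset).card := by
  have hinj : Set.InjOn (fun p ↦ s(x, c.getVert p)) (range c.length) :=
    fun a ha b hb hab ↦ hc.isCycle.getVert_injOn' (by simp at ha ⊢; omega) (by simp at hb ⊢; omega)
      (Sym2.congr_right.mp hab)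
  rw [← card_image_of_injOn (hinj.mono (filter_subset _ _))]
  congr 1
  ext e
  simp only [mem_image, mem_filter, mem_range]
  refine ⟨fun ⟨p, ⟨_, hp⟩, he⟩ ↦ he ▸ hp, fun he ↦ ?_⟩
  obtain ⟨y, rfl⟩ := Sym2.mem_iff_exists.mp (hinc e he)
  obtain ⟨p, rfl, hp⟩ := mem_support_iff_exists_getVert.mp (hc.mem_support y)
  refine ⟨p, ⟨hp.lt_of_ne ?_, he⟩, rfl⟩
  rintro rfl
  simp at he

end Walk.IsHamiltonianCycle

end SimpleGraph

/-- Let `H` consist of a (spanning) even cycle `c` together with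
`2k - 1` chords all incident with the vertex `x` (`k ≥ 1`), and suppose `H` has at most
`k` distinct even cycle lengths. Then there is an odd `O₁ ≥ 3` such that the length of the
cycle is `k(O₁ - 1) + 2`, the cycle is a longest even cycle of `H`, and the even cycle
lengths of `H` are exactly `{ i(O₁ - 1) + 2 : 1 ≤ i ≤ k }`. -/
theorem even_cycle_lengths_of_chords {V : Type*} [Fintype V] [DecidableEq V]
    (H : SimpleGraph V) [DecidableRel H.Adj] (k : ℕ) (hk : 1 ≤ k)
    (x : V) (c : H.Walk x x) (hc : c.IsHamiltonianCycle) (hceven : Even c.length)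
    (hchords : (H.edgeFinset \ c.edges.toFinset).card = 2 * k - 1)
    (hinc : ∀ e ∈ H.edgeFinset \ c.edges.toFinset, x ∈ e)
    (hL : (H.evenCycleLengths).ncard ≤ k) :
    ∃ O₁ : ℕ, Odd O₁ ∧ 3 ≤ O₁ ∧
      c.length = k * (O₁ - 1) + 2 ∧
      (∀ n ∈ H.evenCycleLengths, n ≤ c.length) ∧
      H.evenCycleLengths = {n | ∃ i, 1 ≤ i ∧ i ≤ k ∧ n = i * (O₁ - 1) + 2} := by
  set P := {p ∈ range c.length | s(x, c.getVert p) ∈ H.edgeFinset \ c.edges.toFinset}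
  have hlen : ChordedCycleLengths {m | H.HasCycleLength m} c.length P :=
    hc.chordedCycleLengths fun p hp ↦ by
      simpa only [P, mem_filter, mem_range, mem_sdiff, mem_edgeFinset, mem_edgeSet,
        List.mem_toFinset] using hp
  obtain ⟨g, hg, hg2, hn, hE⟩ := hlen.exists_evenLengths_eq hceven hk
    (by rw [hc.card_filter_chord_eq hinc, hchords]) hL
  exact ⟨g + 1, hg.add_one, by omega, by simpa using hn, fun m hm ↦ hlen.le_length m hm.2,
    by simpa [evenCycleLengths] using hE⟩
end
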